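/- arXiv:2109.02029 — 4 statements merged into one kernel-verified Lean document; each statement's English description precedes it below -/
import Mathlib

section
/- Let d ≥ 2. There exists a finite ℝ^d-valued Radon measure F on ℝ^d, divergence free in the sense of distributions, such that sup_{t>0} t·H^1_∞({x ∈ ℝ^d : |I_{d−1} F(x)| > t}) = +∞. -/
open MeasureTheory Metric ENNReal

/-- The Morrey norm `‖ν‖_{M^β} = sup_{x, r>0} ν(B(x,r))/r^β` of a (non-negative) measure. -/
noncomputable def morreyNorm {d : ℕ} (β : ℝ) (ν : Measure (EuclideanSpace ℝ (Fin d))) : ℝ≥0∞ :=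
  ⨆ (x : EuclideanSpace ℝ (Fin d)) (r : ℝ) (_ : 0 < r),
    ν (Metric.ball x r) / ENNReal.ofReal (r ^ β)

/-- The Hausdorff content `H^β_∞(s)`: infimum of `∑ rᵢ^β` over countable covers of `s`
by open balls `B(cᵢ, rᵢ)`. -/
noncomputable def hContent {d : ℕ} (β : ℝ) (s : Set (EuclideanSpace ℝ (Fin d))) : ℝ≥0∞ :=
  ⨅ (c : ℕ → EuclideanSpace ℝ (Fin d)) (r : ℕ → ℝ) (_ : ∀ i, 0 < r i)
    (_ : s ⊆ ⋃ i, Metric.ball (c i) (r i)), ∑' i, ENNReal.ofReal (r i ^ β)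

/-- The Riesz potential `I_α F(x) = ∫ |x-y|^{α-d} dF(y)` of the `ℝ^d`-valued measure
`F = f σ` (polar decomposition: a non-negative measure `σ` and a vector density `f`).
The normalizing constant is omitted. -/
noncomputable def rieszPot {d : ℕ} (α : ℝ) (σ : Measure (EuclideanSpace ℝ (Fin d)))
    (f : EuclideanSpace ℝ (Fin d) → EuclideanSpace ℝ (Fin d)) (x : EuclideanSpace ℝ (Fin d)) :
    EuclideanSpace ℝ (Fin d) :=
  ∫ y, ‖x - y‖ ^ (α - (d : ℝ)) • f y ∂σ

/-- The vector measure `F = f σ` is divergence free in the sense of distributions: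
`∫ ∇φ · dF = 0` for all test functions `φ ∈ C_c^∞(ℝ^d)`. -/
def DivFree {d : ℕ} (σ : Measure (EuclideanSpace ℝ (Fin d)))
    (f : EuclideanSpace ℝ (Fin d) → EuclideanSpace ℝ (Fin d)) : Prop :=
  ∀ φ : EuclideanSpace ℝ (Fin d) → ℝ, ContDiff ℝ (⊤ : ℕ∞) φ → HasCompactSupport φ →
    ∫ x, (inner ℝ (gradient φ x) (f x) : ℝ) ∂σ = 0


open MeasureTheory Metric ENNReal Real

namespace St2Aux

local notation "⟪" x ", " y "⟫" => inner (𝕜 := ℝ) x y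

variable {E : Type*} [NormedAddCommGroup E] [InnerProductSpace ℝ E]

/-- The circle parametrization. -/
noncomputable def gam (a b : E) (θ : ℝ) : E := Real.cos θ • a + Real.sin θ • b

/-- The unit tangent. -/
noncomputable def tanv (a b : E) (θ : ℝ) : E := (-Real.sin θ) • a + Real.cos θ • b

/-- The vector field (rotation field). -/
noncomputable def fv (a b : E) (x : E) : E := (-⟪x, b⟫) • a + ⟪x, a⟫ • b

/-- distance profile -/
noncomputable def W (δ u : ℝ) : ℝ := Real.sqrt (δ ^ 2 + 2 * (1 + δ) * (1 - Real.cos u))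

section basic

lemma hba {a b : E} (hab : ⟪a, b⟫ = 0) : ⟪b, a⟫ = 0 := by
  rw [real_inner_comm]; exact hab

variable {a b : E} (haa : ⟪a, a⟫ = 1) (hab : ⟪a, b⟫ = 0) (hbb : ⟪b, b⟫ = 1)

include haa hab hbb

lemma fv_gam (θ : ℝ) : fv a b (gam a b θ) = tanv a b θ := by
  have h1 : ‖a‖ ^ 2 = 1 := by rw [← real_inner_self_eq_norm_sq]; exact haa
  have h2 : ‖b‖ ^ 2 = 1 := by rw [← real_inner_self_eq_norm_sq]; exact hbb
  simp [fv, gam, tanv, inner_add_left, real_inner_smul_left, haa, hab, hbb, hba hab, h1, h2]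

lemma inner_gam_gam (α θ : ℝ) : ⟪gam a b α, gam a b θ⟫ = Real.cos (θ - α) := by
  simp only [gam, inner_add_left, inner_add_right, real_inner_smul_left,
    real_inner_smul_right, haa, hab, hbb, hba hab, Real.cos_sub]
  ring

lemma inner_tanv_tanv (α θ : ℝ) : ⟪tanv a b α, tanv a b θ⟫ = Real.cos (θ - α) := by
  simp only [tanv, inner_add_left, inner_add_right, real_inner_smul_left,
    real_inner_smul_right, haa, hab, hbb, hba hab, Real.cos_sub]
  ring

lemma norm_tanv (α : ℝ) : ‖tanv a b α‖ = 1 := by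
  have h := inner_tanv_tanv haa hab hbb α α
  rw [real_inner_self_eq_norm_mul_norm, sub_self, Real.cos_zero] at h
  nlinarith [norm_nonneg (tanv a b α)]

lemma norm_gam (θ : ℝ) : ‖gam a b θ‖ = 1 := by
  have h := inner_gam_gam haa hab hbb θ θ
  rw [real_inner_self_eq_norm_mul_norm, sub_self, Real.cos_zero] at h
  nlinarith [norm_nonneg (gam a b θ)]

lemma norm_a : ‖a‖ = 1 := by
  have h : ⟪a, a⟫ = ‖a‖ * ‖a‖ := real_inner_self_eq_norm_mul_norm a
  rw [haa] at h; nlinarith [norm_nonneg a]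

lemma norm_point_sub (δ α θ : ℝ) :
    ‖(1 + δ) • gam a b α - gam a b θ‖ = W δ (θ - α) := by
  have h : ⟪(1 + δ) • gam a b α - gam a b θ, (1 + δ) • gam a b α - gam a b θ⟫
      = δ ^ 2 + 2 * (1 + δ) * (1 - Real.cos (θ - α)) := by
    have h1 := inner_gam_gam haa hab hbb α θ
    have h2 := inner_gam_gam haa hab hbb θ α
    have h3 := inner_gam_gam haa hab hbb α α
    have h4 := inner_gam_gam haa hab hbb θ θ
    rw [sub_self, Real.cos_zero] at h3 h4
    have h5 : α - θ = -(θ - α) := by ring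
    rw [h5, Real.cos_neg] at h2
    simp only [inner_sub_left, inner_sub_right, real_inner_smul_left, real_inner_smul_right,
      h1, h2, h3, h4]
    ring
  rw [W, ← h, real_inner_self_eq_norm_mul_norm]
  exact (Real.sqrt_mul_self (norm_nonneg ((1 + δ) • gam a b α - gam a b θ))).symm

end basic

lemma cos_one_half : (1 : ℝ) / 2 ≤ Real.cos 1 := by
  nlinarith [Real.one_sub_sq_div_two_le_cos (x := 1)]

lemma W_pos {δ : ℝ} (hδ : 0 < δ) (u : ℝ) : 0 < W δ u := by
  apply Real.sqrt_pos.mpr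
  nlinarith [Real.cos_le_one u]

lemma continuous_W {δ : ℝ} : Continuous (W δ) := by
  apply Real.continuous_sqrt.comp
  continuity

lemma W_le {δ u : ℝ} (hδ0 : 0 ≤ δ) (hδ1 : δ ≤ 1) (hu : 0 ≤ u) : W δ u ≤ δ + 2 * u := by
  rw [W, show δ + 2 * u = Real.sqrt ((δ + 2 * u) ^ 2) by
    rw [Real.sqrt_sq (by linarith)]]
  apply Real.sqrt_le_sqrt
  nlinarith [Real.one_sub_sq_div_two_le_cos (x := u), Real.cos_le_one u]

lemma G_ge_neg_one {δ : ℝ} (hδ : 0 < δ) (u : ℝ) : -1 ≤ Real.cos u / W δ u := by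
  have hW := W_pos hδ u
  rcases le_or_gt 0 (Real.cos u) with h | h
  · exact le_trans (by norm_num) (div_nonneg h hW.le)
  · have harg : (1:ℝ) ≤ δ ^ 2 + 2 * (1 + δ) * (1 - Real.cos u) := by nlinarith
    have hW1 : 1 ≤ W δ u := by
      rw [W]
      nlinarith [Real.sq_sqrt (show (0:ℝ) ≤ δ ^ 2 + 2 * (1 + δ) * (1 - Real.cos u) by nlinarith),
        Real.sqrt_nonneg (δ ^ 2 + 2 * (1 + δ) * (1 - Real.cos u))]
    rw [le_div_iff₀ hW]
    nlinarith [Real.neg_one_le_cos u]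

lemma G_lower_on_01 {δ u : ℝ} (hδ0 : 0 < δ) (hδ1 : δ ≤ 1) (hu0 : 0 ≤ u) (hu1 : u ≤ 1) :
    (1 / 2) * (δ + 2 * u)⁻¹ ≤ Real.cos u / W δ u := by
  have hW := W_pos hδ0 u
  have hWle := W_le hδ0.le hδ1 hu0
  have hc : (1 : ℝ) / 2 ≤ Real.cos u := by
    nlinarith [Real.one_sub_sq_div_two_le_cos (x := u)]
  have hd : 0 < δ + 2 * u := by linarith
  rw [show (1 / 2 : ℝ) * (δ + 2 * u)⁻¹ = (1/2) / (δ + 2 * u) by ring]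
  exact div_le_div₀ (by linarith) hc hW hWle

lemma continuous_G {δ : ℝ} (hδ : 0 < δ) :
    Continuous (fun u => Real.cos u / W δ u) :=
  Real.continuous_cos.div continuous_W (fun u => (W_pos hδ u).ne')

lemma intervalIntegrable_G {δ : ℝ} (hδ : 0 < δ) (x y : ℝ) :
    IntervalIntegrable (fun u => Real.cos u / W δ u) volume x y :=
  (continuous_G hδ).intervalIntegrable x y

lemma integral_G_big (t : ℝ) (ht : 0 < t) :
    t < ∫ u in (0:ℝ)..(2*π), Real.cos u / W (Real.exp (-(4*(t+2*π+1)))) u := by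
  set δ := Real.exp (-(4*(t+2*π+1))) with hδdef
  have hδ0 : 0 < δ := Real.exp_pos _
  have hπ := Real.pi_gt_three
  have hδ1 : δ ≤ 1 := by
    have h := Real.exp_le_exp.mpr (show -(4*(t+2*π+1)) ≤ 0 by nlinarith)
    rw [Real.exp_zero] at h
    exact h
  have hlogδ : Real.log δ = -(4*(t+2*π+1)) := Real.log_exp _
  have hsplit : ∫ u in (0:ℝ)..(2*π), Real.cos u / W δ u
      = (∫ u in (0:ℝ)..1, Real.cos u / W δ u) + ∫ u in (1:ℝ)..(2*π), Real.cos u / W δ u :=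
    (intervalIntegral.integral_add_adjacent_intervals (intervalIntegrable_G hδ0 0 1)
      (intervalIntegrable_G hδ0 1 (2*π))).symm
  have htail : -(2*π) ≤ ∫ u in (1:ℝ)..(2*π), Real.cos u / W δ u := by
    have h := intervalIntegral.integral_mono_on (by linarith : (1:ℝ) ≤ 2*π)
      (intervalIntegrable_const (c := (-1:ℝ))) (intervalIntegrable_G hδ0 1 (2*π))
      (fun u _ => G_ge_neg_one hδ0 u)
    rw [intervalIntegral.integral_const, smul_eq_mul] at h
    nlinarith [h]
  have heval : ∫ u in (0:ℝ)..1, (1/2) * (δ + 2*u)⁻¹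
      = (1/4) * Real.log (δ + 2*1) - (1/4) * Real.log (δ + 2*0) := by
    apply intervalIntegral.integral_eq_sub_of_hasDerivAt
      (f := fun u : ℝ => (1/4) * Real.log (δ + 2*u))
    · intro u hu
      rw [Set.uIcc_of_le (by norm_num : (0:ℝ) ≤ 1)] at hu
      have hpos : 0 < δ + 2*u := by nlinarith [hu.1]
      have h1 : HasDerivAt (fun u : ℝ => δ + 2*u) 2 u := by
        simpa using ((hasDerivAt_id u).const_mul (2:ℝ)).const_add δ
      have h2 := (h1.log hpos.ne').const_mul (1/4 : ℝ)
      refine h2.congr_deriv ?_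
      ring
    · apply ContinuousOn.intervalIntegrable
      apply ContinuousOn.mul continuousOn_const
      apply ContinuousOn.inv₀
      · fun_prop
      · intro u hu
        rw [Set.uIcc_of_le (by norm_num : (0:ℝ) ≤ 1)] at hu
        nlinarith [hu.1]
  have hhead : (1/4) * Real.log (δ + 2) - (1/4) * Real.log δ
      ≤ ∫ u in (0:ℝ)..1, Real.cos u / W δ u := by
    have h := intervalIntegral.integral_mono_on (by norm_num : (0:ℝ) ≤ 1)
      (by
        apply ContinuousOn.intervalIntegrable
        apply ContinuousOn.mul continuousOn_const
        apply ContinuousOn.inv₀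
        · fun_prop
        · intro u hu
          rw [Set.uIcc_of_le (by norm_num : (0:ℝ) ≤ 1)] at hu
          nlinarith [hu.1])
      (intervalIntegrable_G hδ0 0 1)
      (fun u hu => G_lower_on_01 hδ0 hδ1 hu.1 hu.2)
    rw [heval] at h
    calc (1/4) * Real.log (δ + 2) - (1/4) * Real.log δ
        = (1/4) * Real.log (δ + 2*1) - (1/4) * Real.log (δ + 2*0) := by norm_num
      _ ≤ _ := h
  have hlog2 : 0 ≤ Real.log (δ + 2) := Real.log_nonneg (by linarith)
  rw [hsplit]
  nlinarith [htail, hhead]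

section pot

variable {a b : E} (haa : ⟪a, a⟫ = 1) (hab : ⟪a, b⟫ = 0) (hbb : ⟪b, b⟫ = 1)

lemma continuous_gam : Continuous (gam a b) := by unfold gam; fun_prop

lemma continuous_fv : Continuous (fv a b) := by
  unfold fv
  have h1 : Continuous fun x : E => (inner ℝ x b : ℝ) := continuous_id.inner continuous_const
  have h2 : Continuous fun x : E => (inner ℝ x a : ℝ) := continuous_id.inner continuous_const
  exact (h1.neg.smul continuous_const).add (h2.smul continuous_const)

lemma periodic_G' (δ : ℝ) : Function.Periodic (fun u => Real.cos u / W δ u) (2*π) := by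
  intro u
  simp only [W, Real.cos_add_two_pi]

include haa hab hbb

lemma pot_bound [CompleteSpace E] {δ : ℝ} (hδ : 0 < δ) (α : ℝ) :
    (∫ u in (0:ℝ)..(2*π), Real.cos u / W δ u)
      ≤ ‖∫ θ in Set.Ioc (0:ℝ) (2*π),
          ‖((1+δ) • gam a b α) - gam a b θ‖⁻¹ • fv a b (gam a b θ)‖ := by
  set p := (1+δ) • gam a b α with hp
  set V := fun θ => ‖p - gam a b θ‖⁻¹ • fv a b (gam a b θ) with hV
  have hnorm : ∀ θ, ‖p - gam a b θ‖ = W δ (θ - α) := fun θ =>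
    norm_point_sub haa hab hbb δ α θ
  have hVcont : Continuous V := by
    apply Continuous.smul
    · apply Continuous.inv₀
      · exact (continuous_const.sub continuous_gam).norm
      · intro θ; rw [hnorm θ]; exact (W_pos hδ _).ne'
    · exact continuous_fv.comp continuous_gam
  have hVint : IntegrableOn V (Set.Ioc (0:ℝ) (2*π)) volume := hVcont.integrableOn_Ioc
  have hinner : ∀ θ, ⟪tanv a b α, V θ⟫ = Real.cos (θ - α) / W δ (θ - α) := by
    intro θ
    rw [hV]
    simp only
    rw [real_inner_smul_right, fv_gam haa hab hbb, inner_tanv_tanv haa hab hbb,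
      hnorm θ, div_eq_inv_mul]
  have h1 : ∫ θ in Set.Ioc (0:ℝ) (2*π), ⟪tanv a b α, V θ⟫
      = ⟪tanv a b α, ∫ θ in Set.Ioc (0:ℝ) (2*π), V θ⟫ := integral_inner hVint _
  have h2 : ∫ θ in Set.Ioc (0:ℝ) (2*π), ⟪tanv a b α, V θ⟫
      = ∫ u in (0:ℝ)..(2*π), Real.cos u / W δ u := by
    have hrw : (fun θ => ⟪tanv a b α, V θ⟫)
        = fun θ => Real.cos (θ - α) / W δ (θ - α) := funext hinner
    rw [hrw, ← intervalIntegral.integral_of_le (by positivity : (0:ℝ) ≤ 2*π),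
      intervalIntegral.integral_comp_sub_right (fun u => Real.cos u / W δ u) α]
    have hper := (periodic_G' δ).intervalIntegral_add_eq (0 - α) 0
    rw [show 0 - α + 2*π = 2*π - α by ring, show (0:ℝ) + 2*π = 2*π by ring] at hper
    exact hper
  calc ∫ u in (0:ℝ)..(2*π), Real.cos u / W δ u
      = ⟪tanv a b α, ∫ θ in Set.Ioc (0:ℝ) (2*π), V θ⟫ := by rw [← h1, h2]
    _ ≤ ‖tanv a b α‖ * ‖∫ θ in Set.Ioc (0:ℝ) (2*π), V θ‖ := real_inner_le_norm _ _
    _ = ‖∫ θ in Set.Ioc (0:ℝ) (2*π), V θ‖ := by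
        rw [norm_tanv haa hab hbb, one_mul]

lemma inner_a_gam (θ : ℝ) : ⟪a, gam a b θ⟫ = Real.cos θ := by
  have h1 : ‖a‖ ^ 2 = 1 := by rw [← real_inner_self_eq_norm_sq]; exact haa
  simp [gam, inner_add_right, real_inner_smul_right, haa, hab, h1]

lemma cover_bound {δ : ℝ} (hδ : 0 ≤ δ) {s : Set E}
    (hs : ∀ α : ℝ, ((1+δ) • gam a b α) ∈ s)
    (c : ℕ → E) (r : ℕ → ℝ)
    (hcov : s ⊆ ⋃ i, Metric.ball (c i) (r i)) :
    1 ≤ ∑' i, ENNReal.ofReal (r i) := by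
  have h1δ : (0:ℝ) < 1 + δ := by linarith
  have hsub : Set.Icc (-1:ℝ) 1 ⊆ ⋃ i, Set.Ioo (⟪a, c i⟫ - r i) (⟪a, c i⟫ + r i) := by
    intro x hx
    set α := Real.arccos (x / (1+δ)) with hα
    have hcos : Real.cos α = x / (1+δ) := by
      apply Real.cos_arccos
      · rw [le_div_iff₀ h1δ]; nlinarith [hx.1]
      · rw [div_le_one h1δ]; nlinarith [hx.2]
    obtain ⟨i, hi⟩ := Set.mem_iUnion.mp (hcov (hs α))
    refine Set.mem_iUnion.mpr ⟨i, ?_⟩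
    rw [mem_ball, dist_eq_norm] at hi
    have hin : ⟪a, (1+δ) • gam a b α - c i⟫ = x - ⟪a, c i⟫ := by
      rw [inner_sub_right, real_inner_smul_right, inner_a_gam haa hab hbb, hcos]
      field_simp
    have habs : |x - ⟪a, c i⟫| < r i := by
      calc |x - ⟪a, c i⟫| = |⟪a, (1+δ) • gam a b α - c i⟫| := by rw [hin]
        _ ≤ ‖a‖ * ‖(1+δ) • gam a b α - c i‖ := abs_real_inner_le_norm _ _
        _ = ‖(1+δ) • gam a b α - c i‖ := by rw [norm_a haa hab hbb, one_mul]
        _ < r i := hi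
    have := abs_lt.mp habs
    exact ⟨by linarith [this.1], by linarith [this.2]⟩
  have hm : volume (Set.Icc (-1:ℝ) 1)
      ≤ ∑' i, volume (Set.Ioo (⟪a, c i⟫ - r i) (⟪a, c i⟫ + r i)) :=
    le_trans (measure_mono hsub) (measure_iUnion_le _)
  rw [Real.volume_Icc] at hm
  have hvols : ∀ i, volume (Set.Ioo (⟪a, c i⟫ - r i) (⟪a, c i⟫ + r i))
      = 2 * ENNReal.ofReal (r i) := by
    intro i
    rw [Real.volume_Ioo, show (⟪a, c i⟫ + r i) - (⟪a, c i⟫ - r i) = 2 * r i by ring,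
      ENNReal.ofReal_mul (by norm_num : (0:ℝ) ≤ 2)]
    norm_num
  rw [tsum_congr hvols, ENNReal.tsum_mul_left] at hm
  have h2 : (ENNReal.ofReal (1 - (-1)) : ℝ≥0∞) = 2 * 1 := by norm_num
  rw [h2] at hm
  exact (ENNReal.mul_le_mul_iff_right (by norm_num) (by norm_num)).mp hm

end pot

end St2Aux

/-- For `d ≥ 2` there exists a finite divergence-free `ℝ^d`-valued Radon
measure `F = f σ` for which the weak-type quantity
`sup_{t>0} t · H^1_∞({|I_{d-1} F| > t})` is infinite. -/
theorem statement2 (d : ℕ) (hd : 2 ≤ d) :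
    ∃ (σ : Measure (EuclideanSpace ℝ (Fin d)))
      (f : EuclideanSpace ℝ (Fin d) → EuclideanSpace ℝ (Fin d)),
      IsFiniteMeasure σ ∧ Integrable f σ ∧ DivFree σ f ∧
      (⨆ (t : ℝ) (_ : 0 < t),
          ENNReal.ofReal t * hContent 1 {x | t < ‖rieszPot ((d : ℝ) - 1) σ f x‖}) = ⊤ := by
  classical
  have h0 : 0 < d := by omega
  have h1 : 1 < d := by omega
  set i0 : Fin d := ⟨0, h0⟩ with hi0
  set i1 : Fin d := ⟨1, h1⟩ with hi1
  set a : EuclideanSpace ℝ (Fin d) := EuclideanSpace.single i0 (1:ℝ) with ha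
  set b : EuclideanSpace ℝ (Fin d) := EuclideanSpace.single i1 (1:ℝ) with hb
  have hne : i1 ≠ i0 := by simp [hi0, hi1, Fin.ext_iff]
  have haa : (inner ℝ a a : ℝ) = 1 := by
    simp [ha, EuclideanSpace.inner_single_left, EuclideanSpace.single_apply]
  have hbb : (inner ℝ b b : ℝ) = 1 := by
    simp [hb, EuclideanSpace.inner_single_left, EuclideanSpace.single_apply]
  have hab : (inner ℝ a b : ℝ) = 0 := by
    simp [ha, hb, EuclideanSpace.inner_single_left, EuclideanSpace.single_apply, hne]
  set γ := St2Aux.gam a b with hγ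
  set σ : Measure (EuclideanSpace ℝ (Fin d)) :=
    Measure.map γ (volume.restrict (Set.Ioc (0:ℝ) (2*Real.pi))) with hσ
  set f := St2Aux.fv a b with hf
  have hγcont : Continuous γ := St2Aux.continuous_gam
  have hfcont : Continuous f := St2Aux.continuous_fv
  haveI hfin0 : IsFiniteMeasure (volume.restrict (Set.Ioc (0:ℝ) (2*Real.pi))) :=
    ⟨by rw [Measure.restrict_apply_univ]; exact measure_Ioc_lt_top⟩
  haveI hfinσ : IsFiniteMeasure σ := Measure.isFiniteMeasure_map _ _
  refine ⟨σ, f, hfinσ, ?_, ?_, ?_⟩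
  · -- Integrable
    rw [hσ, integrable_map_measure hfcont.aestronglyMeasurable hγcont.measurable.aemeasurable]
    exact (hfcont.comp hγcont).integrableOn_Ioc
  · -- DivFree
    intro φ hφ hφc
    have hφd : Differentiable ℝ φ := hφ.differentiable (by simp)
    have hgrad : ∀ x v, (inner ℝ (gradient φ x) v : ℝ) = fderiv ℝ φ x v := by
      intro x v
      rw [gradient]
      exact InnerProductSpace.toDual_symm_apply
    have hfd : Continuous fun x => fderiv ℝ φ x := hφ.continuous_fderiv (by simp)
    have hgradcont : Continuous fun x => gradient φ x := by
      have hrw : (fun x => gradient φ x)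
          = fun x => (InnerProductSpace.toDual ℝ _).symm (fderiv ℝ φ x) := by
        funext x; rw [gradient]
      rw [hrw]
      exact (LinearIsometryEquiv.continuous _).comp hfd
    have hintcont : Continuous fun x => (inner ℝ (gradient φ x) (f x) : ℝ) :=
      hgradcont.inner hfcont
    rw [hσ, integral_map hγcont.measurable.aemeasurable
      (by rw [← hσ]; exact hintcont.aestronglyMeasurable)]
    have htanv : Continuous (St2Aux.tanv a b) := by unfold St2Aux.tanv; fun_prop
    have hkey : ∀ θ : ℝ, HasDerivAt (fun s => φ (γ s))
        (fderiv ℝ φ (γ θ) (St2Aux.tanv a b θ)) θ := by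
      intro θ
      have hγd : HasDerivAt γ (St2Aux.tanv a b θ) θ := by
        rw [hγ]; unfold St2Aux.gam St2Aux.tanv
        exact ((Real.hasDerivAt_cos θ).smul_const a).add
          ((Real.hasDerivAt_sin θ).smul_const b)
      exact (hφd (γ θ)).hasFDerivAt.comp_hasDerivAt θ hγd
    have hrw2 : (fun θ => (inner ℝ (gradient φ (γ θ)) (f (γ θ)) : ℝ))
        = fun θ => fderiv ℝ φ (γ θ) (St2Aux.tanv a b θ) := by
      funext θ
      rw [hf, St2Aux.fv_gam haa hab hbb, hgrad]
    rw [hrw2, ← intervalIntegral.integral_of_le (by positivity : (0:ℝ) ≤ 2*Real.pi)]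
    have hicont : Continuous fun θ => fderiv ℝ φ (γ θ) (St2Aux.tanv a b θ) :=
      (hfd.comp hγcont).clm_apply htanv
    rw [intervalIntegral.integral_eq_sub_of_hasDerivAt (fun θ _ => hkey θ)
      (hicont.intervalIntegrable 0 (2*Real.pi))]
    have hγper : γ (2*Real.pi) = γ 0 := by
      rw [hγ]; unfold St2Aux.gam
      rw [Real.cos_two_pi, Real.sin_two_pi, Real.cos_zero, Real.sin_zero]
    rw [hγper, sub_self]
  · -- the supremum is ⊤
    have hrp : ∀ x : EuclideanSpace ℝ (Fin d), rieszPot ((d:ℝ)-1) σ f x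
        = ∫ θ in Set.Ioc (0:ℝ) (2*Real.pi), ‖x - γ θ‖⁻¹ • f (γ θ) := by
      intro x
      have hexp : ((d:ℝ) - 1 - (d:ℝ)) = -1 := by ring
      rw [rieszPot, hexp]
      simp_rw [Real.rpow_neg_one]
      have hmeas : AEStronglyMeasurable (fun y => ‖x - y‖⁻¹ • f y) σ := by
        apply Measurable.aestronglyMeasurable
        have h1 : Measurable fun y : EuclideanSpace ℝ (Fin d) => ‖x - y‖⁻¹ :=
          ((measurable_const.sub measurable_id).norm).inv
        exact h1.smul hfcont.measurable
      rw [hσ, integral_map hγcont.measurable.aemeasurable (by rw [← hσ]; exact hmeas)]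
    -- membership of near-circle points in superlevel sets
    have hmem : ∀ t : ℝ, 0 < t → ∀ α : ℝ,
        ((1 + Real.exp (-(4*(t+2*Real.pi+1)))) • γ α)
          ∈ {x | t < ‖rieszPot ((d:ℝ)-1) σ f x‖} := by
      intro t ht α
      set δ := Real.exp (-(4*(t+2*Real.pi+1))) with hδ
      have hδ0 : 0 < δ := Real.exp_pos _
      have h2 := St2Aux.pot_bound haa hab hbb hδ0 α
      have h3 := St2Aux.integral_G_big t ht
      rw [Set.mem_setOf_eq, hrp]
      calc t < ∫ u in (0:ℝ)..(2*Real.pi), Real.cos u / St2Aux.W δ u := h3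
        _ ≤ _ := h2
    have hcont : ∀ t : ℝ, 0 < t →
        (1:ℝ≥0∞) ≤ hContent 1 {x | t < ‖rieszPot ((d:ℝ)-1) σ f x‖} := by
      intro t ht
      rw [hContent]
      refine le_iInf fun c => le_iInf fun r => le_iInf fun hr => le_iInf fun hcov => ?_
      have hrw : ∀ i, ENNReal.ofReal (r i ^ (1:ℝ)) = ENNReal.ofReal (r i) := by
        intro i; rw [Real.rpow_one]
      rw [tsum_congr hrw]
      exact St2Aux.cover_bound haa hab hbb (Real.exp_pos _).le (hmem t ht) c r hcov
    rw [eq_top_iff, ← ENNReal.iSup_natCast]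
    refine iSup_le fun n => ?_
    have hpos : (0:ℝ) < (n:ℝ) + 1 := by positivity
    calc (n : ℝ≥0∞) = ENNReal.ofReal (n:ℝ) := (ENNReal.ofReal_natCast n).symm
      _ ≤ ENNReal.ofReal ((n:ℝ)+1) := ENNReal.ofReal_le_ofReal (by linarith)
      _ ≤ ENNReal.ofReal ((n:ℝ)+1)
            * hContent 1 {x | (n:ℝ)+1 < ‖rieszPot ((d:ℝ)-1) σ f x‖} :=
          le_mul_of_one_le_right' (hcont ((n:ℝ)+1) hpos)
      _ ≤ _ := le_iSup₂_of_le ((n:ℝ)+1) hpos le_rfl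
end

section
/- Let d ≥ 2 and α ∈ (d−1, d). There exists a constant C = C(α,d) > 0 with the following property: if μ is a finite signed (or vector-valued) measure on ℝ^d with compact support, zero mean μ(ℝ^d) = 0, and ‖μ‖_{M^1} ≤ 1, then for every non-negative Radon measure ν on ℝ^d one has ∫_{ℝ^d} |I_α μ(x)| dν(x) ≤ C·diam(supp μ)·‖ν‖_{M^{d−α}}. -/
open MeasureTheory Metric ENNReal

/-- The (topological) support of a measure on `ℝ^d`: the points all of whose
neighbourhoods have positive measure. -/
def mSupport {d : ℕ} (σ : Measure (EuclideanSpace ℝ (Fin d))) : Set (EuclideanSpace ℝ (Fin d)) :=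
  {x | ∀ r : ℝ, 0 < r → 0 < σ (Metric.ball x r)}

lemma myGeom_le {a q : ℝ} (ha : 0 ≤ a) (h0 : 0 ≤ q) (h1 : q < 1) :
    ∑' i : ℕ, ENNReal.ofReal (a * q ^ i) ≤ ENNReal.ofReal (a * (1 - q)⁻¹) := by
  have hs : Summable (fun i : ℕ => a * q ^ i) :=
    (summable_geometric_of_lt_one h0 h1).mul_left a
  rw [← ENNReal.ofReal_tsum_of_nonneg (fun i => mul_nonneg ha (pow_nonneg h0 i)) hs]
  apply ENNReal.ofReal_le_ofReal
  rw [tsum_mul_left, tsum_geometric_of_lt_one h0 h1]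

lemma rpow_diff_le {c s a b : ℝ} (hc : c < 0) (hs : 0 < s) (ha : s ≤ a) (hb : s ≤ b) :
    |a ^ c - b ^ c| ≤ (-c) * s ^ (c - 1) * |a - b| := by
  have key : ∀ x ∈ Set.Ici s, HasDerivWithinAt (fun t : ℝ => t ^ c)
      (c * x ^ (c - 1)) (Set.Ici s) x := by
    intro x hx
    exact (Real.hasDerivAt_rpow_const (Or.inl (ne_of_gt (lt_of_lt_of_le hs hx)))).hasDerivWithinAt
  have bound : ∀ x ∈ Set.Ici s, ‖c * x ^ (c - 1)‖ ≤ (-c) * s ^ (c - 1) := by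
    intro x hx
    rw [norm_mul, Real.norm_eq_abs, Real.norm_eq_abs, abs_of_neg hc,
      abs_of_nonneg (Real.rpow_nonneg (le_trans hs.le hx) _)]
    exact mul_le_mul_of_nonneg_left (Real.rpow_le_rpow_of_nonpos hs hx (by linarith))
      (by linarith)
  have := Convex.norm_image_sub_le_of_norm_hasDerivWithin_le key bound (convex_Ici s) hb ha
  simpa [Real.norm_eq_abs] using this

lemma pow_base_rpow {b : ℝ} (hb : 0 ≤ b) (i : ℕ) (c : ℝ) :
    ((b ^ i : ℝ)) ^ c = (b ^ c) ^ i := by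
  rw [← Real.rpow_natCast b i, ← Real.rpow_mul hb, mul_comm, Real.rpow_mul hb,
    Real.rpow_natCast]

lemma lemA {d : ℕ} {α : ℝ} (hα1 : (d : ℝ) - 1 < α) (hα2 : α < d)
    (τ : Measure (EuclideanSpace ℝ (Fin d))) {D : ℝ} (hD : 0 < D)
    (hball : ∀ x r, 0 < r → τ (Metric.ball x r) ≤ ENNReal.ofReal r)
    (huniv : τ Set.univ ≤ ENNReal.ofReal D) (x : EuclideanSpace ℝ (Fin d)) :
    ∫⁻ y, ENNReal.ofReal (‖x - y‖ ^ (α - d)) ∂τ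
      ≤ ENNReal.ofReal ((2 ^ ((d : ℝ) - α)
          + 4 ^ ((d : ℝ) - α) * (1 - 2 ^ ((d : ℝ) - α - 1))⁻¹) * D ^ (α - d + 1)) := by
  set c : ℝ := α - d with hc_def
  have hc : c < 0 := by simp [hc_def]; linarith
  have hc1 : -1 < c := by simp only [hc_def]; linarith
  set q : ℝ := (1 / 2 : ℝ) ^ (c + 1) with hq_def
  have hq0 : 0 < q := Real.rpow_pos_of_pos (by norm_num) _
  have hq1 : q < 1 := Real.rpow_lt_one (by norm_num) (by norm_num) (by linarith)
  set a : ℝ := (D / 4) ^ c * D with ha_def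
  have ha0 : 0 ≤ a := mul_nonneg (Real.rpow_nonneg (by linarith) _) hD.le
  set g : ℕ → EuclideanSpace ℝ (Fin d) → ℝ≥0∞ := fun i =>
    (Metric.ball x (D / 2 ^ i)).indicator (fun _ => ENNReal.ofReal ((D / 2 ^ (i + 2)) ^ c))
    with hg_def
  have claim : ∀ y, ENNReal.ofReal (‖x - y‖ ^ c)
      ≤ ENNReal.ofReal ((D / 2) ^ c) + ∑' i, g i y := by
    intro y
    rcases lt_or_ge (D / 2) ‖x - y‖ with h1 | h1
    · refine le_trans (ENNReal.ofReal_le_ofReal ?_) le_self_add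
      exact Real.rpow_le_rpow_of_nonpos (by linarith) h1.le hc.le
    rcases eq_or_lt_of_le (norm_nonneg (x - y)) with h0 | h0
    · rw [← h0, Real.zero_rpow (ne_of_lt hc)]
      simp
    · have ht : (2 : ℝ) ≤ D / ‖x - y‖ := (le_div_iff₀ h0).2 (by linarith)
      obtain ⟨n, hn1, hn2⟩ := exists_nat_pow_near (by linarith : (1:ℝ) ≤ D / ‖x - y‖)
        (one_lt_two)
      have hn : 1 ≤ n := by
        by_contra h
        push_neg at h
        interval_cases n
        · simp at hn2; nlinarith
      have hub : ‖x - y‖ ≤ D / 2 ^ n := by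
        rw [le_div_iff₀ (by positivity)]
        calc ‖x - y‖ * 2 ^ n ≤ ‖x - y‖ * (D / ‖x - y‖) := by
              apply mul_le_mul_of_nonneg_left hn1 (norm_nonneg _)
          _ = D := by field_simp
      have hlb : D / 2 ^ (n + 1) < ‖x - y‖ := by
        rw [div_lt_iff₀ (by positivity)]
        rw [div_lt_iff₀ h0] at hn2
        linarith [hn2]
      have hmem : y ∈ Metric.ball x (D / 2 ^ (n - 1)) := by
        rw [Metric.mem_ball, dist_comm, dist_eq_norm]
        calc ‖x - y‖ ≤ D / 2 ^ n := hub
          _ < D / 2 ^ (n - 1) := by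
              apply div_lt_div_of_pos_left hD (by positivity)
              exact pow_lt_pow_right₀ one_lt_two (by omega)
      have hterm : ENNReal.ofReal (‖x - y‖ ^ c) ≤ g (n - 1) y := by
        rw [hg_def]
        simp only [Set.indicator_of_mem hmem]
        apply ENNReal.ofReal_le_ofReal
        have hnn : n - 1 + 2 = n + 1 := by omega
        rw [hnn]
        exact Real.rpow_le_rpow_of_nonpos (by positivity) hlb.le hc.le
      exact le_trans (le_trans hterm (ENNReal.le_tsum (n - 1))) le_add_self
  have gmeas : ∀ i, Measurable (g i) := fun i =>
    measurable_const.indicator measurableSet_ball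
  calc ∫⁻ y, ENNReal.ofReal (‖x - y‖ ^ c) ∂τ
      ≤ ∫⁻ y, (ENNReal.ofReal ((D / 2) ^ c) + ∑' i, g i y) ∂τ := lintegral_mono claim
    _ = ENNReal.ofReal ((D / 2) ^ c) * τ Set.univ + ∑' i, ∫⁻ y, g i y ∂τ := by
        rw [lintegral_add_left measurable_const, lintegral_const,
          lintegral_tsum (fun i => (gmeas i).aemeasurable)]
    _ ≤ ENNReal.ofReal ((D / 2) ^ c) * ENNReal.ofReal D
        + ∑' i, ENNReal.ofReal (a * q ^ i) := by
        refine add_le_add (mul_le_mul_right huniv _) (ENNReal.tsum_le_tsum fun i => ?_)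
        rw [hg_def]
        simp only
        rw [lintegral_indicator measurableSet_ball, setLIntegral_const]
        have hterm_eq : a * q ^ i = (D / 2 ^ (i + 2)) ^ c * (D / 2 ^ i) := by
          have e1 : (D / 2 ^ (i + 2) : ℝ) = (D / 4) * (1 / 2) ^ i := by
            rw [pow_add, one_div, inv_pow]; ring
          have e2 : (D / 2 ^ i : ℝ) = D * (1 / 2) ^ i := by
            rw [div_eq_mul_inv, ← inv_pow]; norm_num
          rw [e1, e2, Real.mul_rpow (by linarith) (by positivity),
            pow_base_rpow (by norm_num) i c, hq_def, ha_def,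
            Real.rpow_add (by norm_num : (0:ℝ) < 1/2), Real.rpow_one, mul_pow]
          ring
        rw [hterm_eq]
        rw [ENNReal.ofReal_mul (Real.rpow_nonneg (by positivity) _)]
        exact mul_le_mul_right (hball x _ (by positivity)) _
    _ ≤ ENNReal.ofReal ((D / 2) ^ c * D) + ENNReal.ofReal (a * (1 - q)⁻¹) := by
        rw [← ENNReal.ofReal_mul (Real.rpow_nonneg (by linarith) _)]
        exact add_le_add le_rfl (myGeom_le ha0 hq0.le hq1)
    _ ≤ _ := by
        rw [← ENNReal.ofReal_add
          (mul_nonneg (Real.rpow_nonneg (by linarith) _) hD.le)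
          (mul_nonneg ha0 (inv_nonneg.2 (by linarith)))]
        apply ENNReal.ofReal_le_ofReal
        apply le_of_eq
        have e1 : (D / 2) ^ c * D = 2 ^ ((d : ℝ) - α) * D ^ (α - d + 1) := by
          rw [Real.div_rpow hD.le (by norm_num), div_eq_mul_inv,
            ← Real.rpow_neg (by norm_num : (0:ℝ) ≤ 2),
            show -c = (d : ℝ) - α by rw [hc_def]; ring,
            show α - (d:ℝ) + 1 = c + 1 from by rw [hc_def],
            Real.rpow_add hD, Real.rpow_one]
          ring
        have e2 : a = 4 ^ ((d : ℝ) - α) * D ^ (α - d + 1) := by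
          rw [ha_def, Real.div_rpow hD.le (by norm_num), div_eq_mul_inv,
            ← Real.rpow_neg (by norm_num : (0:ℝ) ≤ 4),
            show -c = (d : ℝ) - α by rw [hc_def]; ring,
            show α - (d:ℝ) + 1 = c + 1 from by rw [hc_def],
            Real.rpow_add hD, Real.rpow_one]
          ring
        have e3 : q = 2 ^ ((d : ℝ) - α - 1) := by
          rw [hq_def, one_div, Real.inv_rpow (by norm_num : (0:ℝ) ≤ 2),
            ← Real.rpow_neg (by norm_num : (0:ℝ) ≤ 2),
            show -(c + 1) = (d : ℝ) - α - 1 by rw [hc_def]; ring]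
        rw [e1, e2, e3]
        ring
/-- For `d ≥ 2` and `α ∈ (d-1, d)` there is `C = C(α,d) > 0` such that for
every compactly supported vector measure `μ = f σ` with zero mean and `‖μ‖_{M^1} ≤ 1`
(the Morrey condition on the total variation measure `|μ| = ‖f‖ σ`), and every non-negative
Radon measure `ν`, one has `∫ |I_α μ| dν ≤ C · diam(supp μ) · ‖ν‖_{M^{d-α}}`. -/
theorem statement3 (d : ℕ) (hd : 2 ≤ d) (α : ℝ) (hα1 : (d : ℝ) - 1 < α) (hα2 : α < d) :
    ∃ C : ℝ, 0 < C ∧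
      ∀ (σ : Measure (EuclideanSpace ℝ (Fin d))) [IsFiniteMeasure σ]
        (f : EuclideanSpace ℝ (Fin d) → EuclideanSpace ℝ (Fin d)),
        Integrable f σ →
        IsCompact (mSupport (σ.withDensity fun y => (‖f y‖₊ : ℝ≥0∞))) →
        (∫ y, f y ∂σ) = 0 →
        morreyNorm 1 (σ.withDensity fun y => (‖f y‖₊ : ℝ≥0∞)) ≤ 1 →
        ∀ (ν : Measure (EuclideanSpace ℝ (Fin d))) [IsLocallyFiniteMeasure ν],
          ∫⁻ x, ENNReal.ofReal ‖rieszPot α σ f x‖ ∂ν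
            ≤ ENNReal.ofReal (C * Metric.diam (mSupport (σ.withDensity fun y => (‖f y‖₊ : ℝ≥0∞))))
                * morreyNorm ((d : ℝ) - α) ν := by
  classical
  have hdα : 0 < (d : ℝ) - α := by linarith
  have hq1 : (2:ℝ) ^ ((d : ℝ) - α - 1) < 1 :=
    Real.rpow_lt_one_of_one_lt_of_neg one_lt_two (by linarith)
  have h2p : (0:ℝ) < 2 ^ ((d : ℝ) - α) := Real.rpow_pos_of_pos two_pos _
  have h4p : (0:ℝ) < 4 ^ ((d : ℝ) - α) := Real.rpow_pos_of_pos (by norm_num) _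
  set CA : ℝ := 2 ^ ((d : ℝ) - α) + 4 ^ ((d : ℝ) - α) * (1 - 2 ^ ((d : ℝ) - α - 1))⁻¹
    with hCA_def
  have hCA : 0 < CA := by
    have hinv : (0:ℝ) < (1 - 2 ^ ((d : ℝ) - α - 1))⁻¹ := inv_pos.2 (by linarith)
    rw [hCA_def]
    have := mul_pos h4p hinv
    linarith
  refine ⟨CA * 2 ^ ((d:ℝ) - α) + 2 * ((d:ℝ) - α) * 4 ^ ((d:ℝ) - α),
    add_pos (mul_pos hCA h2p) (mul_pos (mul_pos two_pos hdα) h4p), ?_⟩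
  intro σ _ f hf hS hmean hM1 ν _
  set τ : Measure (EuclideanSpace ℝ (Fin d)) :=
    σ.withDensity fun y => (‖f y‖₊ : ℝ≥0∞) with hτ_def
  set S := mSupport τ with hS_def
  set D := Metric.diam S with hD_def
  -- ball bound from Morrey hypothesis
  have hτball : ∀ x r, 0 < r → τ (Metric.ball x r) ≤ ENNReal.ofReal r := by
    intro x r hr
    have h1 : τ (Metric.ball x r) / ENNReal.ofReal (r ^ (1:ℝ)) ≤ 1 := by
      refine le_trans ?_ hM1
      rw [morreyNorm]
      exact le_iSup_of_le x (le_iSup_of_le r (le_iSup_of_le hr le_rfl))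
    rw [Real.rpow_one] at h1
    have h2 := (ENNReal.div_le_iff (ENNReal.ofReal_pos.2 hr).ne' ENNReal.ofReal_ne_top).1 h1
    simpa using h2
  have hSm : MeasurableSet S := hS.isClosed.measurableSet
  have hScompl : τ Sᶜ = 0 := by
    apply measure_null_of_locally_null
    intro x hx
    simp only [hS_def, mSupport, Set.mem_compl_iff, Set.mem_setOf_eq, not_forall] at hx
    obtain ⟨r, hr, hr0⟩ := hx
    push_neg at hr0
    exact ⟨Metric.ball x r, mem_nhdsWithin_of_mem_nhds (Metric.ball_mem_nhds x hr),
      le_antisymm hr0 zero_le⟩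
  have hfS : ∀ᵐ y ∂σ, y ∉ S → f y = 0 := by
    have h2 : ∫⁻ y in Sᶜ, (‖f y‖₊ : ℝ≥0∞) ∂σ = 0 := by
      rw [← withDensity_apply _ hSm.compl]
      exact hScompl
    have h3 : (fun y => (‖f y‖₊ : ℝ≥0∞)) =ᵐ[σ.restrict Sᶜ] 0 :=
      (lintegral_eq_zero_iff' hf.1.enorm.restrict).1 h2
    filter_upwards [ae_imp_of_ae_restrict h3] with y hy hyS
    have := hy hyS
    simpa [Pi.zero_apply] using this
  by_cases hMain : S.Nonempty ∧ 0 < D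
  swap
  · -- degenerate case: the measure vanishes
    have hsingleton : ∀ x₀ ∈ S, τ {x₀} = 0 := by
      intro x₀ _
      refine le_antisymm ?_ zero_le
      refine ENNReal.le_of_forall_pos_le_add fun ε hε _ => ?_
      calc τ {x₀} ≤ τ (Metric.ball x₀ ε) :=
            measure_mono (Set.singleton_subset_iff.2 (Metric.mem_ball_self hε))
        _ ≤ ENNReal.ofReal ε := hτball x₀ ε hε
        _ = (ε : ℝ≥0∞) := ENNReal.ofReal_coe_nnreal
        _ ≤ 0 + ε := by simp
    have hτ0 : τ Set.univ = 0 := by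
      rcases S.eq_empty_or_nonempty with hSe | hSne
      · have he : Sᶜ = Set.univ := by simp [hSe]
        rw [← he]; exact hScompl
      · refine le_antisymm ?_ zero_le
        obtain ⟨x₀, hx₀⟩ := hSne
        have hD0 : D = 0 := by
          by_contra h
          exact hMain ⟨⟨x₀, hx₀⟩, lt_of_le_of_ne Metric.diam_nonneg (Ne.symm h)⟩
        have hsub : S ⊆ {x₀} := by
          intro y hy
          have h1 : dist y x₀ ≤ D := Metric.dist_le_diam_of_mem hS.isBounded hy hx₀
          have h2 : dist y x₀ = 0 := le_antisymm (by linarith [hD0]) dist_nonneg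
          simpa [Set.mem_singleton_iff] using dist_eq_zero.1 h2
        calc τ Set.univ = τ (S ∪ Sᶜ) := by rw [Set.union_compl_self]
          _ ≤ τ S + τ Sᶜ := measure_union_le _ _
          _ ≤ τ {x₀} + 0 := add_le_add (measure_mono hsub) hScompl.le
          _ ≤ 0 := by rw [hsingleton x₀ hx₀, add_zero]
    have hf0 : ∀ᵐ y ∂σ, f y = 0 := by
      have hl : ∫⁻ y, (‖f y‖₊ : ℝ≥0∞) ∂σ = 0 := by
        rw [hτ_def, withDensity_apply _ MeasurableSet.univ, Measure.restrict_univ] at hτ0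
        exact hτ0
      filter_upwards [(lintegral_eq_zero_iff' hf.1.enorm).1 hl] with y hy
      simpa [Pi.zero_apply] using hy
    have hR0 : ∀ x, rieszPot α σ f x = 0 := by
      intro x
      rw [rieszPot]
      apply integral_eq_zero_of_ae
      filter_upwards [hf0] with y hy
      simp [hy]
    simp only [hR0, norm_zero, ENNReal.ofReal_zero, lintegral_const, zero_mul]
    exact zero_le
  obtain ⟨⟨x₀, hx₀⟩, hD⟩ := hMain
  have hSsub : S ⊆ Metric.closedBall x₀ D := fun y hy =>
    Metric.mem_closedBall.2 (Metric.dist_le_diam_of_mem hS.isBounded hy hx₀)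
  have hτuniv : τ Set.univ ≤ ENNReal.ofReal D := by
    refine ENNReal.le_of_forall_pos_le_add fun ε hε _ => ?_
    have hεR : (0:ℝ) < ε := hε
    have hsub2 : (Set.univ : Set (EuclideanSpace ℝ (Fin d)))
        ⊆ Metric.ball x₀ (D + ε) ∪ Sᶜ := by
      intro z _
      by_cases hz : z ∈ S
      · left
        have h1 : dist z x₀ ≤ D := Metric.mem_closedBall.1 (hSsub hz)
        exact Metric.mem_ball.2 (by linarith)
      · exact Or.inr hz
    calc τ Set.univ ≤ τ (Metric.ball x₀ (D + ε) ∪ Sᶜ) := measure_mono hsub2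
      _ ≤ τ (Metric.ball x₀ (D + ε)) + τ Sᶜ := measure_union_le _ _
      _ ≤ ENNReal.ofReal (D + ε) + 0 :=
          add_le_add (hτball _ _ (by linarith)) hScompl.le
      _ ≤ ENNReal.ofReal D + ε := by
          rw [add_zero, ENNReal.ofReal_add hD.le hεR.le]
          simp [ENNReal.ofReal_coe_nnreal]
  have hgmeas : ∀ x : EuclideanSpace ℝ (Fin d),
      Measurable (fun y => ENNReal.ofReal (‖x - y‖ ^ (α - (d:ℝ)))) := fun x =>
    (((continuous_const.sub continuous_id).norm.measurable).pow
      measurable_const).ennreal_ofReal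
  have hPt : ∀ x, ENNReal.ofReal ‖rieszPot α σ f x‖
      ≤ ∫⁻ y, ENNReal.ofReal (‖x - y‖ ^ (α - (d:ℝ))) ∂τ := by
    intro x
    rw [rieszPot, ofReal_norm]
    refine le_trans (enorm_integral_le_lintegral_enorm _) (le_of_eq ?_)
    rw [hτ_def, lintegral_withDensity_eq_lintegral_mul₀ (f := fun y => (‖f y‖₊ : ℝ≥0∞)) hf.1.enorm
      (hgmeas x).aemeasurable]
    refine lintegral_congr fun y => ?_
    simp only [Pi.mul_apply]
    rw [enorm_smul,
      Real.enorm_eq_ofReal (Real.rpow_nonneg (norm_nonneg _) _), mul_comm, enorm_eq_nnnorm]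
  have hA' : ∀ x, ENNReal.ofReal ‖rieszPot α σ f x‖
      ≤ ENNReal.ofReal (CA * D ^ (α - (d:ℝ) + 1)) := by
    intro x
    refine le_trans (hPt x) ?_
    have := lemA hα1 hα2 τ hD hτball hτuniv x
    rw [← hCA_def] at this
    exact this
  have hlintf : ∫⁻ y, (‖f y‖₊ : ℝ≥0∞) ∂σ = τ Set.univ := by
    rw [hτ_def, withDensity_apply _ MeasurableSet.univ, Measure.restrict_univ]
  have hnormf : ∫ y, ‖f y‖ ∂σ ≤ D := by
    rw [integral_norm_eq_lintegral_enorm hf.1]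
    exact ENNReal.toReal_le_of_le_ofReal hD.le (hlintf.trans_le hτuniv)
  have hc : α - (d:ℝ) < 0 := by linarith
  -- far-field estimate using the zero mean
  have hFar : ∀ x, 2 * D ≤ dist x x₀ →
      ‖rieszPot α σ f x‖
        ≤ ((d:ℝ) - α) * (dist x x₀ / 2) ^ (α - (d:ℝ) - 1) * (D * D) := by
    intro x hx
    have hR : 0 < dist x x₀ := lt_of_lt_of_le (by linarith) hx
    have hR2 : 0 < dist x x₀ / 2 := by linarith
    have hySbound : ∀ y ∈ S, dist x x₀ / 2 ≤ ‖x - y‖ := by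
      intro y hy
      have h1 : dist y x₀ ≤ D := Metric.mem_closedBall.1 (hSsub hy)
      have h2 := dist_triangle x y x₀
      rw [← dist_eq_norm]
      linarith
    have hmeasK : AEStronglyMeasurable (fun y => ‖x - y‖ ^ (α - (d:ℝ)) • f y) σ :=
      ((((continuous_const.sub continuous_id).norm.measurable).pow
        measurable_const).aestronglyMeasurable).smul hf.1
    have hI : Integrable (fun y => ‖x - y‖ ^ (α - (d:ℝ)) • f y) σ := by
      refine Integrable.mono' (hf.norm.const_mul ((dist x x₀ / 2) ^ (α - (d:ℝ)))) hmeasK ?_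
      filter_upwards [hfS] with y hy
      by_cases hyS : y ∈ S
      · rw [norm_smul, Real.norm_eq_abs, abs_of_nonneg (Real.rpow_nonneg (norm_nonneg _) _)]
        exact mul_le_mul_of_nonneg_right
          (Real.rpow_le_rpow_of_nonpos hR2 (hySbound y hyS) hc.le) (norm_nonneg _)
      · rw [hy hyS]; simp
    have hIc : Integrable (fun y => ‖x - x₀‖ ^ (α - (d:ℝ)) • f y) σ :=
      hf.smul (‖x - x₀‖ ^ (α - (d:ℝ)))
    have hsplit : rieszPot α σ f x
        = ∫ y, (‖x - y‖ ^ (α - (d:ℝ)) - ‖x - x₀‖ ^ (α - (d:ℝ))) • f y ∂σ := by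
      rw [rieszPot]
      simp only [sub_smul]
      rw [integral_sub hI hIc, integral_smul, hmean, smul_zero, sub_zero]
    rw [hsplit]
    refine le_trans (norm_integral_le_integral_norm _) ?_
    have hI2 : Integrable (fun y => (‖x - y‖ ^ (α - (d:ℝ)) - ‖x - x₀‖ ^ (α - (d:ℝ))) • f y) σ := by
      simp only [sub_smul]
      exact hI.sub hIc
    have hcoef : (0:ℝ) ≤ ((d:ℝ) - α) * (dist x x₀ / 2) ^ (α - (d:ℝ) - 1) * D :=
      mul_nonneg (mul_nonneg (by linarith) (Real.rpow_nonneg hR2.le _)) hD.le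
    have hbound : ∫ y, ‖(‖x - y‖ ^ (α - (d:ℝ)) - ‖x - x₀‖ ^ (α - (d:ℝ))) • f y‖ ∂σ
        ≤ ∫ y, (((d:ℝ) - α) * (dist x x₀ / 2) ^ (α - (d:ℝ) - 1) * D) * ‖f y‖ ∂σ := by
      refine integral_mono_ae hI2.norm (hf.norm.const_mul _) ?_
      filter_upwards [hfS] with y hy
      by_cases hyS : y ∈ S
      · rw [norm_smul, Real.norm_eq_abs]
        refine mul_le_mul_of_nonneg_right ?_ (norm_nonneg _)
        have hb2 : dist x x₀ / 2 ≤ ‖x - x₀‖ := by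
          rw [← dist_eq_norm]; linarith
        have h1 := rpow_diff_le hc hR2 (hySbound y hyS) hb2
        have h2 : |‖x - y‖ - ‖x - x₀‖| ≤ dist y x₀ := by
          have h3 := abs_norm_sub_norm_le (x - y) (x - x₀)
          rw [_root_.sub_sub_sub_cancel_left] at h3
          rw [dist_comm y x₀, dist_eq_norm]
          exact h3
        have h4 : dist y x₀ ≤ D := Metric.mem_closedBall.1 (hSsub hyS)
        calc |‖x - y‖ ^ (α - (d:ℝ)) - ‖x - x₀‖ ^ (α - (d:ℝ))|
            ≤ (-(α - (d:ℝ))) * (dist x x₀ / 2) ^ (α - (d:ℝ) - 1) * |‖x - y‖ - ‖x - x₀‖| := h1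
          _ ≤ (-(α - (d:ℝ))) * (dist x x₀ / 2) ^ (α - (d:ℝ) - 1) * D := by
              refine mul_le_mul_of_nonneg_left (le_trans h2 h4) ?_
              exact mul_nonneg (by linarith) (Real.rpow_nonneg hR2.le _)
          _ = ((d:ℝ) - α) * (dist x x₀ / 2) ^ (α - (d:ℝ) - 1) * D := by ring
      · rw [hy hyS]
        simp [mul_nonneg hcoef (norm_nonneg (0 : EuclideanSpace ℝ (Fin d)))]
    refine le_trans hbound ?_
    rw [integral_const_mul]
    calc (((d:ℝ) - α) * (dist x x₀ / 2) ^ (α - (d:ℝ) - 1) * D) * ∫ y, ‖f y‖ ∂σ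
        ≤ (((d:ℝ) - α) * (dist x x₀ / 2) ^ (α - (d:ℝ) - 1) * D) * D :=
          mul_le_mul_of_nonneg_left hnormf hcoef
      _ = ((d:ℝ) - α) * (dist x x₀ / 2) ^ (α - (d:ℝ) - 1) * (D * D) := by ring
  -- the ν side
  set M := morreyNorm ((d:ℝ) - α) ν with hM_def
  have hν : ∀ x r, 0 < r →
      ν (Metric.ball x r) ≤ M * ENNReal.ofReal (r ^ ((d:ℝ) - α)) := by
    intro x r hr
    have h1 : ν (Metric.ball x r) / ENNReal.ofReal (r ^ ((d:ℝ) - α)) ≤ M := by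
      rw [hM_def, morreyNorm]
      exact le_iSup_of_le x (le_iSup_of_le r (le_iSup_of_le hr le_rfl))
    exact (ENNReal.div_le_iff (ENNReal.ofReal_pos.2 (Real.rpow_pos_of_pos hr _)).ne'
      ENNReal.ofReal_ne_top).1 h1
  set ann : ℕ → Set (EuclideanSpace ℝ (Fin d)) := fun k =>
    Metric.ball x₀ (2 ^ (k + 2) * D) \ Metric.ball x₀ (2 ^ (k + 1) * D) with hann_def
  have hann_meas : ∀ k, MeasurableSet (ann k) := fun k =>
    measurableSet_ball.diff measurableSet_ball
  have hcover : (Set.univ : Set (EuclideanSpace ℝ (Fin d)))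
      ⊆ Metric.ball x₀ (2 * D) ∪ ⋃ k, ann k := by
    intro z _
    rcases lt_or_ge (dist z x₀) (2 * D) with h | h
    · exact Or.inl (Metric.mem_ball.2 h)
    · right
      have h2D : (0:ℝ) < 2 * D := by linarith
      have h1 : (1:ℝ) ≤ dist z x₀ / (2 * D) := (le_div_iff₀ h2D).2 (by linarith)
      obtain ⟨n, hn1, hn2⟩ := exists_nat_pow_near h1 one_lt_two
      refine Set.mem_iUnion.2 ⟨n, ?_, ?_⟩
      · refine Metric.mem_ball.2 ?_
        rw [div_lt_iff₀ h2D] at hn2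
        calc dist z x₀ < 2 ^ (n + 1) * (2 * D) := hn2
          _ = 2 ^ (n + 2) * D := by ring
      · intro hmem
        rw [Metric.mem_ball] at hmem
        rw [le_div_iff₀ h2D] at hn1
        have he : (2:ℝ) ^ (n + 1) * D = 2 ^ n * (2 * D) := by ring
        rw [he] at hmem
        linarith
  have hB0 : ∫⁻ x in Metric.ball x₀ (2 * D), ENNReal.ofReal ‖rieszPot α σ f x‖ ∂ν
      ≤ ENNReal.ofReal (CA * 2 ^ ((d:ℝ) - α) * D) * M := by
    calc ∫⁻ x in Metric.ball x₀ (2 * D), ENNReal.ofReal ‖rieszPot α σ f x‖ ∂ν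
        ≤ ∫⁻ _x in Metric.ball x₀ (2 * D),
            ENNReal.ofReal (CA * D ^ (α - (d:ℝ) + 1)) ∂ν := lintegral_mono fun x => hA' x
      _ = ENNReal.ofReal (CA * D ^ (α - (d:ℝ) + 1)) * ν (Metric.ball x₀ (2 * D)) :=
          setLIntegral_const _ _
      _ ≤ ENNReal.ofReal (CA * D ^ (α - (d:ℝ) + 1))
            * (M * ENNReal.ofReal ((2 * D) ^ ((d:ℝ) - α))) :=
          mul_le_mul_right (hν x₀ (2 * D) (by linarith)) _
      _ = (ENNReal.ofReal (CA * D ^ (α - (d:ℝ) + 1))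
            * ENNReal.ofReal ((2 * D) ^ ((d:ℝ) - α))) * M := by ring
      _ = ENNReal.ofReal (CA * 2 ^ ((d:ℝ) - α) * D) * M := by
          rw [← ENNReal.ofReal_mul (mul_nonneg hCA.le (Real.rpow_nonneg hD.le _))]
          congr 1
          refine congrArg ENNReal.ofReal ?_
          rw [Real.mul_rpow (by norm_num : (0:ℝ) ≤ 2) hD.le]
          have e : D ^ (α - (d:ℝ) + 1) * D ^ ((d:ℝ) - α) = D := by
            rw [← Real.rpow_add hD, show α - (d:ℝ) + 1 + ((d:ℝ) - α) = 1 by ring,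
              Real.rpow_one]
          calc CA * D ^ (α - (d:ℝ) + 1) * (2 ^ ((d:ℝ) - α) * D ^ ((d:ℝ) - α))
              = CA * 2 ^ ((d:ℝ) - α) * (D ^ (α - (d:ℝ) + 1) * D ^ ((d:ℝ) - α)) := by ring
            _ = CA * 2 ^ ((d:ℝ) - α) * D := by rw [e]
  have hBk : ∀ k, ∫⁻ x in ann k, ENNReal.ofReal ‖rieszPot α σ f x‖ ∂ν
      ≤ ENNReal.ofReal ((((d:ℝ) - α) * 4 ^ ((d:ℝ) - α) * D) * (1/2) ^ k) * M := by
    intro k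
    have h2k : (0:ℝ) < 2 ^ k := pow_pos two_pos k
    have hk2D : (2:ℝ) * D ≤ 2 ^ (k + 1) * D := by
      have h21 : (2:ℝ) ≤ 2 ^ (k + 1) := by
        calc (2:ℝ) = 2 ^ 1 := (pow_one 2).symm
          _ ≤ 2 ^ (k + 1) := pow_le_pow_right₀ one_le_two (by omega)
      nlinarith
    have hFx : ∀ x ∈ ann k, ENNReal.ofReal ‖rieszPot α σ f x‖
        ≤ ENNReal.ofReal ((((d:ℝ) - α) * ((2:ℝ) ^ k * D) ^ (α - (d:ℝ) - 1)) * (D * D)) := by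
      intro x hx
      have hdist : 2 ^ (k + 1) * D ≤ dist x x₀ := by
        have hx2 := hx.2
        simpa [Metric.mem_ball, not_lt] using hx2
      have h2D : 2 * D ≤ dist x x₀ := le_trans hk2D hdist
      apply ENNReal.ofReal_le_ofReal
      refine le_trans (hFar x h2D) ?_
      have key : (dist x x₀ / 2) ^ (α - (d:ℝ) - 1) ≤ ((2:ℝ) ^ k * D) ^ (α - (d:ℝ) - 1) := by
        refine Real.rpow_le_rpow_of_nonpos (by positivity) ?_ (by linarith)
        rw [le_div_iff₀ (by norm_num : (0:ℝ) < 2)]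
        calc (2:ℝ) ^ k * D * 2 = 2 ^ (k + 1) * D := by ring
          _ ≤ dist x x₀ := hdist
      exact mul_le_mul_of_nonneg_right
        (mul_le_mul_of_nonneg_left key (by linarith))
        (mul_nonneg hD.le hD.le)
    calc ∫⁻ x in ann k, ENNReal.ofReal ‖rieszPot α σ f x‖ ∂ν
        ≤ ∫⁻ _x in ann k,
            ENNReal.ofReal ((((d:ℝ) - α) * ((2:ℝ) ^ k * D) ^ (α - (d:ℝ) - 1)) * (D * D)) ∂ν := by
          refine lintegral_mono_ae ?_
          filter_upwards [ae_restrict_mem (hann_meas k)] with x hx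
          exact hFx x hx
      _ = ENNReal.ofReal ((((d:ℝ) - α) * ((2:ℝ) ^ k * D) ^ (α - (d:ℝ) - 1)) * (D * D))
            * ν (ann k) := setLIntegral_const _ _
      _ ≤ ENNReal.ofReal ((((d:ℝ) - α) * ((2:ℝ) ^ k * D) ^ (α - (d:ℝ) - 1)) * (D * D))
            * (M * ENNReal.ofReal ((2 ^ (k + 2) * D) ^ ((d:ℝ) - α))) := by
          refine mul_le_mul_right ?_ _
          refine le_trans (measure_mono (Set.diff_subset)) ?_
          exact hν x₀ _ (by positivity)
      _ = (ENNReal.ofReal ((((d:ℝ) - α) * ((2:ℝ) ^ k * D) ^ (α - (d:ℝ) - 1)) * (D * D))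
            * ENNReal.ofReal ((2 ^ (k + 2) * D) ^ ((d:ℝ) - α))) * M := by ring
      _ = ENNReal.ofReal ((((d:ℝ) - α) * 4 ^ ((d:ℝ) - α) * D) * (1/2) ^ k) * M := by
          rw [← ENNReal.ofReal_mul
            (mul_nonneg (mul_nonneg (by linarith) (Real.rpow_nonneg (by positivity) _))
              (mul_nonneg hD.le hD.le))]
          congr 1
          refine congrArg ENNReal.ofReal ?_
          have e1 : ((2:ℝ) ^ k * D) ^ (α - (d:ℝ) - 1)
              = ((2:ℝ) ^ k) ^ (α - (d:ℝ) - 1) * D ^ (α - (d:ℝ) - 1) :=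
            Real.mul_rpow h2k.le hD.le
          have e2 : ((2:ℝ) ^ (k + 2) * D) ^ ((d:ℝ) - α)
              = ((2:ℝ) ^ k) ^ ((d:ℝ) - α) * (4:ℝ) ^ ((d:ℝ) - α) * D ^ ((d:ℝ) - α) := by
            rw [show (2:ℝ) ^ (k + 2) = 2 ^ k * 4 by rw [pow_add]; norm_num,
              Real.mul_rpow (by positivity) hD.le,
              Real.mul_rpow h2k.le (by norm_num)]
          have e3 : ((2:ℝ) ^ k) ^ (α - (d:ℝ) - 1) * ((2:ℝ) ^ k) ^ ((d:ℝ) - α) = (1/2:ℝ) ^ k := by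
            rw [← Real.rpow_add h2k, show α - (d:ℝ) - 1 + ((d:ℝ) - α) = -1 by ring,
              Real.rpow_neg_one, ← inv_pow, one_div]
          have e4 : D ^ (α - (d:ℝ) - 1) * D ^ ((d:ℝ) - α) = D⁻¹ := by
            rw [← Real.rpow_add hD, show α - (d:ℝ) - 1 + ((d:ℝ) - α) = -1 by ring,
              Real.rpow_neg_one]
          rw [e1, e2]
          calc ((d:ℝ) - α) * (((2:ℝ) ^ k) ^ (α - (d:ℝ) - 1) * D ^ (α - (d:ℝ) - 1)) * (D * D)
                * (((2:ℝ) ^ k) ^ ((d:ℝ) - α) * (4:ℝ) ^ ((d:ℝ) - α) * D ^ ((d:ℝ) - α))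
              = ((d:ℝ) - α) * (4:ℝ) ^ ((d:ℝ) - α)
                * ((((2:ℝ) ^ k) ^ (α - (d:ℝ) - 1) * ((2:ℝ) ^ k) ^ ((d:ℝ) - α))
                  * ((D ^ (α - (d:ℝ) - 1) * D ^ ((d:ℝ) - α)) * (D * D))) := by ring
            _ = ((d:ℝ) - α) * (4:ℝ) ^ ((d:ℝ) - α) * ((1/2:ℝ) ^ k * (D⁻¹ * (D * D))) := by
                rw [e3, e4]
            _ = (((d:ℝ) - α) * 4 ^ ((d:ℝ) - α) * D) * (1/2) ^ k := by
                field_simp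
  -- assemble
  calc ∫⁻ x, ENNReal.ofReal ‖rieszPot α σ f x‖ ∂ν
      = ∫⁻ x, ENNReal.ofReal ‖rieszPot α σ f x‖ ∂(ν.restrict Set.univ) := by
        rw [Measure.restrict_univ]
    _ ≤ ∫⁻ x, ENNReal.ofReal ‖rieszPot α σ f x‖
          ∂(ν.restrict (Metric.ball x₀ (2 * D) ∪ ⋃ k, ann k)) :=
        lintegral_mono' (Measure.restrict_mono hcover le_rfl) le_rfl
    _ ≤ ∫⁻ x, ENNReal.ofReal ‖rieszPot α σ f x‖
          ∂(ν.restrict (Metric.ball x₀ (2 * D)) + ν.restrict (⋃ k, ann k)) :=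
        lintegral_mono' (Measure.restrict_union_le _ _) le_rfl
    _ = ∫⁻ x in Metric.ball x₀ (2 * D), ENNReal.ofReal ‖rieszPot α σ f x‖ ∂ν
          + ∫⁻ x, ENNReal.ofReal ‖rieszPot α σ f x‖ ∂(ν.restrict (⋃ k, ann k)) :=
        lintegral_add_measure _ _ _
    _ ≤ ∫⁻ x in Metric.ball x₀ (2 * D), ENNReal.ofReal ‖rieszPot α σ f x‖ ∂ν
          + ∑' k, ∫⁻ x in ann k, ENNReal.ofReal ‖rieszPot α σ f x‖ ∂ν := by
        refine add_le_add le_rfl ?_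
        refine le_trans (lintegral_mono' Measure.restrict_iUnion_le le_rfl) ?_
        rw [lintegral_sum_measure]
    _ ≤ ENNReal.ofReal (CA * 2 ^ ((d:ℝ) - α) * D) * M
          + ∑' k, ENNReal.ofReal ((((d:ℝ) - α) * 4 ^ ((d:ℝ) - α) * D) * (1/2) ^ k) * M :=
        add_le_add hB0 (ENNReal.tsum_le_tsum hBk)
    _ ≤ ENNReal.ofReal (CA * 2 ^ ((d:ℝ) - α) * D) * M
          + ENNReal.ofReal ((((d:ℝ) - α) * 4 ^ ((d:ℝ) - α) * D) * (1 - 1/2)⁻¹) * M := by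
        rw [ENNReal.tsum_mul_right]
        refine add_le_add le_rfl (mul_le_mul_left ?_ M)
        exact myGeom_le (by positivity) (by norm_num) (by norm_num)
    _ = ENNReal.ofReal ((CA * 2 ^ ((d:ℝ) - α) + 2 * ((d:ℝ) - α) * 4 ^ ((d:ℝ) - α)) * D) * M := by
        rw [← add_mul, ← ENNReal.ofReal_add (by positivity) (by positivity)]
        congr 2
        norm_num
        ring
    _ = ENNReal.ofReal ((CA * 2 ^ ((d:ℝ) - α) + 2 * ((d:ℝ) - α) * 4 ^ ((d:ℝ) - α)) * D) * M :=
        rfl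
end

section
/- Let d ≥ 1, α ∈ (d−1, d), and R > 0. There exists a constant C = C(α,d) > 0 such that if μ is a finite signed (or vector-valued) measure on ℝ^d supported in B(0,R) with μ(ℝ^d) = 0 and ‖μ‖_{M^1} ≤ 1, then |I_α μ(x)| ≤ C·R^{α+1−d} for all x ∈ B(0,2R), and |I_α μ(x)| ≤ C·R^2·|x|^{α−d−1} for all x ∉ B(0,2R). -/
open MeasureTheory Metric ENNReal

lemma mvt_rpow {c : ℝ} (hc : c < 0) {m a b : ℝ} (hm : 0 < m) (ha : m ≤ a) (hb : m ≤ b) :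
    |a ^ c - b ^ c| ≤ (-c) * m ^ (c - 1) * |a - b| := by
  have hdiff : ∀ t ∈ Set.Ici m, DifferentiableAt ℝ (fun t : ℝ => t ^ c) t := fun t ht =>
    Real.differentiableAt_rpow_const_of_ne c (by have := lt_of_lt_of_le hm ht; positivity)
  have bound : ∀ t ∈ Set.Ici m, ‖deriv (fun t : ℝ => t ^ c) t‖ ≤ (-c) * m ^ (c - 1) := by
    intro t ht
    have htpos : (0:ℝ) < t := lt_of_lt_of_le hm ht
    rw [Real.deriv_rpow_const t c]
    rw [Real.norm_eq_abs, abs_mul, abs_of_neg hc, abs_of_nonneg (Real.rpow_nonneg htpos.le _)]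
    exact mul_le_mul_of_nonneg_left
      (Real.rpow_le_rpow_of_nonpos hm ht (by linarith)) (by linarith)
  have := (convex_Ici m).norm_image_sub_le_of_norm_deriv_le hdiff bound hb ha
  simpa [Real.norm_eq_abs] using this
lemma geom_bound {d : ℕ} {c : ℝ} (hc1 : -1 < c) (hc0 : c < 0)
    (ν : Measure (EuclideanSpace ℝ (Fin d)))
    (hν : ∀ z r, 0 < r → ν (Metric.ball z r) ≤ ENNReal.ofReal r)
    (x : EuclideanSpace ℝ (Fin d)) {ρ : ℝ} (hρ : 0 < ρ) :
    ∫⁻ y in Metric.ball x ρ, ENNReal.ofReal (‖x - y‖ ^ c) ∂ν ≤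
      ENNReal.ofReal ((2:ℝ) ^ (-c) * (1 - (2:ℝ) ^ (-(c+1)))⁻¹ * ρ ^ (c+1)) := by
  set h : ℝ := (2:ℝ)⁻¹ with hh
  have hhpos : (0:ℝ) < h := by norm_num [hh]
  have hhlt : h < 1 := by norm_num [hh]
  set r : ℕ → ℝ := fun k => ρ * h ^ k with hr
  have hrpos : ∀ k, 0 < r k := fun k => by positivity
  have hrantitone : ∀ k, r (k + 1) < r k := by
    intro k
    simp only [hr, pow_succ]
    have : h ^ k * h < h ^ k * 1 := by
      apply mul_lt_mul_of_pos_left hhlt (by positivity)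
    nlinarith [pow_pos hhpos k]
  set A : ℕ → Set (EuclideanSpace ℝ (Fin d)) :=
    fun k => Metric.ball x (r k) \ Metric.ball x (r (k + 1)) with hA
  set g : EuclideanSpace ℝ (Fin d) → ℝ≥0∞ := fun y => ENNReal.ofReal (‖x - y‖ ^ c) with hg
  -- cover
  have hcover : Metric.ball x ρ ⊆ (⋃ k, A k) ∪ {x} := by
    intro y hy
    rcases eq_or_ne y x with rfl | hyx
    · exact Or.inr rfl
    left
    have ht0 : 0 < dist x y := dist_pos.mpr (Ne.symm hyx)
    have htρ : dist x y < ρ := by rwa [dist_comm, ← mem_ball]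
    -- find k with r (k+1) ≤ dist x y
    have hex : ∃ k, r (k + 1) ≤ dist x y := by
      obtain ⟨k, hk⟩ := exists_pow_lt_of_lt_one (div_pos ht0 hρ) hhlt
      refine ⟨k, ?_⟩
      have : r k ≤ dist x y := by
        rw [hr]
        calc ρ * h ^ k ≤ ρ * (dist x y / ρ) := by
              exact mul_le_mul_of_nonneg_left hk.le hρ.le
          _ = dist x y := by field_simp
      exact le_trans (hrantitone k).le this
    classical
    let k := Nat.find hex
    have hk1 : r (k + 1) ≤ dist x y := Nat.find_spec hex
    have hk2 : dist x y < r k := by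
      rcases Nat.eq_zero_or_pos k with h0 | hpos
      · rw [h0]; simpa [hr] using htρ
      · obtain ⟨j, hj⟩ := Nat.exists_eq_add_of_lt hpos
        have := Nat.find_min hex (m := j) (by omega)
        push_neg at this
        have : dist x y < r (j + 1) := this
        rwa [show k = j + 1 by omega]
    refine Set.mem_iUnion.mpr ⟨k, ?_, ?_⟩
    · rw [mem_ball, dist_comm]; exact hk2
    · rw [mem_ball, dist_comm]; exact not_lt.mpr hk1
  have step1 : ∫⁻ y in Metric.ball x ρ, g y ∂ν ≤ (∑' k, ∫⁻ y in A k, g y ∂ν) + 0 := by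
    calc ∫⁻ y in Metric.ball x ρ, g y ∂ν ≤ ∫⁻ y in (⋃ k, A k) ∪ {x}, g y ∂ν :=
          lintegral_mono_set hcover
      _ ≤ (∫⁻ y in ⋃ k, A k, g y ∂ν) + ∫⁻ y in {x}, g y ∂ν := lintegral_union_le _ _ _
      _ ≤ (∑' k, ∫⁻ y in A k, g y ∂ν) + ∫⁻ y in {x}, g y ∂ν := by
          gcongr
          exact lintegral_iUnion_le _ _
      _ = (∑' k, ∫⁻ y in A k, g y ∂ν) + 0 := by
          congr 1
          rw [lintegral_singleton]
          have : g x = 0 := by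
            simp [hg, Real.zero_rpow hc0.ne]
          simp [this]
  rw [add_zero] at step1
  -- bound each annulus
  have step2 : ∀ k, ∫⁻ y in A k, g y ∂ν ≤ ENNReal.ofReal (r (k+1) ^ c * r k) := by
    intro k
    have hbd : ∫⁻ y in A k, g y ∂ν ≤ ∫⁻ _ in A k, ENNReal.ofReal (r (k+1) ^ c) ∂ν := by
      apply setLIntegral_mono measurable_const
      intro y hy
      apply ENNReal.ofReal_le_ofReal
      apply Real.rpow_le_rpow_of_nonpos (hrpos (k+1)) _ hc0.le
      have : ¬ dist y x < r (k + 1) := by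
        have := hy.2; rwa [mem_ball] at this
      rw [← dist_eq_norm, dist_comm]
      exact not_lt.mp this
    refine hbd.trans ?_
    rw [setLIntegral_const]
    calc ENNReal.ofReal (r (k+1) ^ c) * ν (A k)
        ≤ ENNReal.ofReal (r (k+1) ^ c) * ENNReal.ofReal (r k) := by
          gcongr
          exact le_trans (measure_mono Set.diff_subset) (hν x (r k) (hrpos k))
      _ = ENNReal.ofReal (r (k+1) ^ c * r k) := (ENNReal.ofReal_mul (by positivity)).symm
  -- geometric sum
  have hq01 : 0 < h ^ (c + 1) := Real.rpow_pos_of_pos hhpos _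
  have hqlt : h ^ (c + 1) < 1 := Real.rpow_lt_one hhpos.le hhlt (by linarith)
  have hterm : ∀ k, r (k+1) ^ c * r k = (ρ ^ (c+1) * h ^ c) * (h ^ (c + 1) : ℝ) ^ k := by
    intro k
    rw [hr]
    simp only []
    rw [Real.mul_rpow hρ.le (by positivity), ← Real.rpow_natCast h (k+1),
        ← Real.rpow_natCast h k, ← Real.rpow_natCast (h ^ (c+1)) k,
        ← Real.rpow_mul hhpos.le, ← Real.rpow_mul hhpos.le]
    have hexp : (↑(k+1) : ℝ) * c + (k:ℝ) = c + (c+1)*(k:ℝ) := by push_cast; ring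
    calc ρ^c * h^((↑(k+1):ℝ)*c) * (ρ * h^(k:ℝ))
        = (ρ^c * ρ) * (h^((↑(k+1):ℝ)*c) * h^(k:ℝ)) := by ring
      _ = ρ^(c+1) * h^(c + (c+1)*(k:ℝ)) := by
          rw [← Real.rpow_add hhpos, ← Real.rpow_add_one hρ.ne' c, hexp]
      _ = ρ^(c+1) * h^c * h^((c+1)*(k:ℝ)) := by rw [Real.rpow_add hhpos]; ring
  have hsum : (∑' k, ∫⁻ y in A k, g y ∂ν) ≤
      ∑' k : ℕ, ENNReal.ofReal (ρ ^ (c+1) * h ^ c) * (ENNReal.ofReal (h ^ (c+1))) ^ k := by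
    apply ENNReal.tsum_le_tsum
    intro k
    refine (step2 k).trans ?_
    rw [hterm k, ENNReal.ofReal_mul (by positivity), ENNReal.ofReal_pow hq01.le]
  rw [ENNReal.tsum_mul_left, ENNReal.tsum_geometric] at hsum
  refine step1.trans (hsum.trans ?_)
  have h1 : (1 : ℝ≥0∞) - ENNReal.ofReal (h ^ (c+1)) = ENNReal.ofReal (1 - h ^ (c+1)) := by
    rw [ENNReal.ofReal_sub _ hq01.le, ENNReal.ofReal_one]
  rw [h1, ← ENNReal.ofReal_inv_of_pos (by linarith), ← ENNReal.ofReal_mul (by positivity)]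
  apply ENNReal.ofReal_le_ofReal
  have hpow : ∀ t : ℝ, h ^ t = (2:ℝ) ^ (-t) := by
    intro t
    rw [hh, ← Real.rpow_neg_one 2, ← Real.rpow_mul (by norm_num : (0:ℝ) ≤ 2)]
    congr 1
    ring
  rw [hpow c, hpow (c+1)]
  apply le_of_eq
  ring


/-- For `d ≥ 1` and `α ∈ (d-1, d)` there is `C = C(α,d) > 0` such that for
every `R > 0` and every finite vector measure `μ = f σ` supported in `B(0,R)` with zero mean
and `‖μ‖_{M^1} ≤ 1`, one has `|I_α μ(x)| ≤ C R^{α+1-d}` on `B(0,2R)` and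
`|I_α μ(x)| ≤ C R² |x|^{α-d-1}` off `B(0,2R)`. -/
theorem statement8 (d : ℕ) (hd : 1 ≤ d) (α : ℝ) (hα1 : (d : ℝ) - 1 < α) (hα2 : α < d) :
    ∃ C : ℝ, 0 < C ∧
      ∀ (R : ℝ), 0 < R →
        ∀ (σ : Measure (EuclideanSpace ℝ (Fin d))) [IsFiniteMeasure σ]
          (f : EuclideanSpace ℝ (Fin d) → EuclideanSpace ℝ (Fin d)),
          Integrable f σ →
          σ (Metric.ball 0 R)ᶜ = 0 →
          (∫ y, f y ∂σ) = 0 →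
          morreyNorm 1 (σ.withDensity fun y => (‖f y‖₊ : ℝ≥0∞)) ≤ 1 →
          (∀ x ∈ Metric.ball (0 : EuclideanSpace ℝ (Fin d)) (2 * R),
              ‖rieszPot α σ f x‖ ≤ C * R ^ (α + 1 - (d : ℝ))) ∧
          (∀ x ∉ Metric.ball (0 : EuclideanSpace ℝ (Fin d)) (2 * R),
              ‖rieszPot α σ f x‖ ≤ C * R ^ 2 * ‖x‖ ^ (α - (d : ℝ) - 1)) := by
  have hc0 : α - (d:ℝ) < 0 := by linarith
  have hc1 : (-1:ℝ) < α - (d:ℝ) := by linarith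
  set Cg : ℝ := (2:ℝ) ^ (-(α - (d:ℝ))) * (1 - (2:ℝ) ^ (-((α - (d:ℝ))+1)))⁻¹ with hCgdef
  have hq : (2:ℝ) ^ (-((α - (d:ℝ))+1)) < 1 :=
    Real.rpow_lt_one_of_one_lt_of_neg (by norm_num) (by linarith)
  have hCgpos : 0 < Cg := mul_pos (Real.rpow_pos_of_pos (by norm_num) _)
    (inv_pos.mpr (by linarith))
  set C1 : ℝ := Cg * 3 ^ ((α - (d:ℝ))+1) with hC1def
  set C2 : ℝ := (-(α - (d:ℝ))) * 2 ^ (1-(α - (d:ℝ))) with hC2def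
  have hC1pos : 0 < C1 := mul_pos hCgpos (Real.rpow_pos_of_pos (by norm_num) _)
  have hC2pos : 0 < C2 := mul_pos (by linarith) (Real.rpow_pos_of_pos (by norm_num) _)
  refine ⟨max C1 C2, lt_max_of_lt_left hC1pos, ?_⟩
  intro R hR σ _ f hf hσ hmean hM
  set ν := σ.withDensity fun y => (‖f y‖₊ : ℝ≥0∞) with hν
  have hball : ∀ z r, 0 < r → ν (Metric.ball z r) ≤ ENNReal.ofReal r := by
    intro z r hr
    have h1 : ν (Metric.ball z r) / ENNReal.ofReal (r ^ (1:ℝ)) ≤ 1 := by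
      refine le_trans ?_ hM
      rw [morreyNorm]
      exact le_iSup_of_le z (le_iSup_of_le r (le_iSup_of_le hr le_rfl))
    rw [Real.rpow_one] at h1
    have hne : ENNReal.ofReal r ≠ 0 := by
      simp only [ne_eq, ENNReal.ofReal_eq_zero, not_le]; exact hr
    have h2 := (ENNReal.div_le_iff hne ENNReal.ofReal_ne_top).mp h1
    simpa using h2
  have hνcompl : ν (Metric.ball (0:EuclideanSpace ℝ (Fin d)) R)ᶜ = 0 := by
    rw [hν, withDensity_apply _ measurableSet_ball.compl,
        Measure.restrict_eq_zero.mpr hσ, lintegral_zero_measure]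
  have hνtot : ν Set.univ ≤ ENNReal.ofReal R := by
    rw [← measure_add_measure_compl
      (measurableSet_ball (x := (0:EuclideanSpace ℝ (Fin d))) (ε := R)), hνcompl, add_zero]
    exact hball 0 R hR
  have hmass : ∫ y, ‖f y‖ ∂σ ≤ R := by
    have h1 : ENNReal.ofReal (∫ y, ‖f y‖ ∂σ) = ∫⁻ y, ‖f y‖₊ ∂σ :=
      ofReal_integral_norm_eq_lintegral_enorm hf
    have h2 : ∫⁻ y, ‖f y‖₊ ∂σ = ν Set.univ := by
      rw [hν, withDensity_apply _ MeasurableSet.univ, Measure.restrict_univ]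
    rw [h2] at h1
    exact (ENNReal.ofReal_le_ofReal_iff hR.le).mp (h1.le.trans hνtot)
  have haesupp : ∀ᵐ y ∂σ, ‖y‖ < R := by
    have h3 : ∀ᵐ y ∂σ, y ∈ Metric.ball (0:EuclideanSpace ℝ (Fin d)) R := mem_ae_iff.mpr hσ
    filter_upwards [h3] with y hy using mem_ball_zero_iff.mp hy
  constructor
  · -- Part 1 : x ∈ B(0, 2R)
    intro x hx
    have hxn : ‖x‖ < 2*R := mem_ball_zero_iff.mp hx
    have hgmeas : Measurable (fun y : EuclideanSpace ℝ (Fin d) =>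
        ENNReal.ofReal (‖x - y‖ ^ (α - (d:ℝ)))) :=
      ENNReal.measurable_ofReal.comp
        (Measurable.pow ((continuous_const.sub continuous_id).norm.measurable) measurable_const)
    have key : (‖rieszPot α σ f x‖₊ : ℝ≥0∞) ≤
        ∫⁻ y, ENNReal.ofReal (‖x - y‖ ^ (α - (d:ℝ))) ∂ν := by
      calc (‖rieszPot α σ f x‖₊ : ℝ≥0∞)
          ≤ ∫⁻ y, ‖(‖x - y‖ ^ (α - (d:ℝ))) • f y‖₊ ∂σ := by
            rw [rieszPot]; exact enorm_integral_le_lintegral_enorm _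
        _ = ∫⁻ y, ((fun y => (‖f y‖₊ : ℝ≥0∞)) *
              fun y => ENNReal.ofReal (‖x - y‖ ^ (α - (d:ℝ)))) y ∂σ := by
            apply lintegral_congr; intro y
            simp only [Pi.mul_apply]
            rw [nnnorm_smul, ENNReal.coe_mul, ← enorm_eq_nnnorm,
              Real.enorm_eq_ofReal (Real.rpow_nonneg (norm_nonneg _) _), mul_comm]
        _ = ∫⁻ y, ENNReal.ofReal (‖x - y‖ ^ (α - (d:ℝ))) ∂ν := by
            rw [hν, lintegral_withDensity_eq_lintegral_mul₀
              (show AEMeasurable (fun y => (‖f y‖₊ : ℝ≥0∞)) σ from hf.aestronglyMeasurable.enorm)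
              hgmeas.aemeasurable]
    have hsplit : ∫⁻ y, ENNReal.ofReal (‖x - y‖ ^ (α - (d:ℝ))) ∂ν ≤
        ENNReal.ofReal (Cg * (3*R) ^ ((α - (d:ℝ))+1)) := by
      rw [← lintegral_add_compl (fun y => ENNReal.ofReal (‖x - y‖ ^ (α - (d:ℝ))))
        (measurableSet_ball (x := x) (ε := 3*R))]
      have h2 : ∫⁻ y in (Metric.ball x (3*R))ᶜ,
          ENNReal.ofReal (‖x - y‖ ^ (α - (d:ℝ))) ∂ν = 0 := by
        apply setLIntegral_measure_zero
        apply measure_mono_null _ hνcompl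
        apply Set.compl_subset_compl.mpr
        intro y hy
        have h4 : ‖y‖ < R := mem_ball_zero_iff.mp hy
        have h5 : dist y x ≤ ‖y‖ + ‖x‖ := by
          rw [dist_eq_norm]
          exact norm_sub_le y x
        exact mem_ball.mpr (by linarith)
      rw [h2, add_zero]
      refine le_trans (geom_bound hc1 hc0 ν hball x (by linarith)) ?_
      rw [hCgdef]
    have key2 := key.trans hsplit
    rw [← enorm_eq_nnnorm, ← ofReal_norm] at key2
    have hb := (ENNReal.ofReal_le_ofReal_iff (by positivity)).mp key2
    refine hb.trans ?_
    rw [Real.mul_rpow (by norm_num) hR.le]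
    have he : α + 1 - (d:ℝ) = (α - (d:ℝ)) + 1 := by ring
    rw [he]
    calc Cg * (3 ^ ((α - (d:ℝ))+1) * R ^ ((α - (d:ℝ))+1))
        = C1 * R ^ ((α - (d:ℝ))+1) := by rw [hC1def]; ring
      _ ≤ max C1 C2 * R ^ ((α - (d:ℝ))+1) := by
          have h13 := Real.rpow_nonneg hR.le ((α - (d:ℝ))+1)
          gcongr
          exact le_max_left _ _
  · -- Part 2 : x ∉ B(0, 2R)
    intro x hx
    have hxn : 2*R ≤ ‖x‖ := not_lt.mp (fun h => hx (mem_ball_zero_iff.mpr h))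
    have hxpos : 0 < ‖x‖ := by linarith
    have hmpos : 0 < ‖x‖ / 2 := by positivity
    have hkmeas : Measurable fun y : EuclideanSpace ℝ (Fin d) => ‖x - y‖ ^ (α - (d:ℝ)) :=
      Measurable.pow ((continuous_const.sub continuous_id).norm.measurable) measurable_const
    have haeb : ∀ᵐ y ∂σ, ‖x‖ / 2 ≤ ‖x - y‖ := by
      filter_upwards [haesupp] with y hy
      have h6 : ‖x‖ - ‖y‖ ≤ ‖x - y‖ := norm_sub_norm_le x y
      linarith
    have hint : Integrable (fun y => (‖x - y‖ ^ (α - (d:ℝ))) • f y) σ := by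
      apply Integrable.mono' (hf.norm.const_mul ((‖x‖/2) ^ (α - (d:ℝ))))
      · exact (hkmeas.aestronglyMeasurable).smul hf.aestronglyMeasurable
      · filter_upwards [haeb] with y hy
        rw [norm_smul, Real.norm_eq_abs, abs_of_nonneg (Real.rpow_nonneg (norm_nonneg _) _)]
        exact mul_le_mul_of_nonneg_right
          (Real.rpow_le_rpow_of_nonpos hmpos hy hc0.le) (norm_nonneg _)
    have hint0 : Integrable (fun y => (‖x‖ ^ (α - (d:ℝ))) • f y) σ :=
      hf.smul (‖x‖ ^ (α - (d:ℝ)))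
    have hrw : rieszPot α σ f x =
        ∫ y, (‖x - y‖ ^ (α - (d:ℝ)) - ‖x‖ ^ (α - (d:ℝ))) • f y ∂σ := by
      rw [rieszPot]
      have h0 : ∫ y, (‖x‖ ^ (α - (d:ℝ))) • f y ∂σ = 0 := by
        rw [integral_smul, hmean, smul_zero]
      rw [← sub_zero (∫ y, (‖x - y‖ ^ (α - (d:ℝ))) • f y ∂σ), ← h0,
        ← integral_sub hint hint0]
      congr 1; funext y; rw [sub_smul]
    rw [hrw]
    set K : ℝ := (-(α - (d:ℝ))) * 2^(1-(α - (d:ℝ))) * ‖x‖^((α - (d:ℝ))-1) * R with hKdef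
    have hKnonneg : 0 ≤ K := by
      rw [hKdef]
      have h7 : (0:ℝ) < 2^(1-(α - (d:ℝ))) := Real.rpow_pos_of_pos (by norm_num) _
      have h8 : (0:ℝ) < ‖x‖^((α - (d:ℝ))-1) := Real.rpow_pos_of_pos hxpos _
      have h9 : (0:ℝ) < -(α - (d:ℝ)) := by linarith
      positivity
    have hbound : ‖∫ y, (‖x - y‖ ^ (α - (d:ℝ)) - ‖x‖ ^ (α - (d:ℝ))) • f y ∂σ‖ ≤
        ∫ y, K * ‖f y‖ ∂σ := by
      apply norm_integral_le_of_norm_le (hf.norm.const_mul K)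
      filter_upwards [haesupp] with y hy
      rw [norm_smul, Real.norm_eq_abs]
      apply mul_le_mul_of_nonneg_right _ (norm_nonneg (f y))
      have ha : ‖x‖/2 ≤ ‖x - y‖ := by
        have h6 : ‖x‖ - ‖y‖ ≤ ‖x - y‖ := norm_sub_norm_le x y
        linarith
      have hbb : ‖x‖/2 ≤ ‖x‖ := by linarith
      have hmvt := mvt_rpow hc0 hmpos ha hbb
      have habs : |‖x - y‖ - ‖x‖| ≤ R := by
        have h10 : |‖x - y‖ - ‖x‖| ≤ ‖(x - y) - x‖ := abs_norm_sub_norm_le (x - y) x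
        have h11 : ‖(x - y) - x‖ = ‖y‖ := by rw [sub_sub_cancel_left, norm_neg]
        rw [h11] at h10
        linarith
      refine hmvt.trans ?_
      have hmc : (‖x‖/2) ^ ((α - (d:ℝ))-1) = 2^(1-(α - (d:ℝ))) * ‖x‖^((α - (d:ℝ))-1) := by
        rw [Real.div_rpow (norm_nonneg x) (by norm_num), div_eq_mul_inv,
          ← Real.rpow_neg (by norm_num : (0:ℝ) ≤ 2)]
        rw [show -((α - (d:ℝ))-1) = 1-(α - (d:ℝ)) by ring]
        ring
      rw [hKdef, hmc]
      have h12 : (0:ℝ) ≤ (-(α - (d:ℝ))) * (2^(1-(α - (d:ℝ))) * ‖x‖^((α - (d:ℝ))-1)) := by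
        have h7 : (0:ℝ) < 2^(1-(α - (d:ℝ))) := Real.rpow_pos_of_pos (by norm_num) _
        have h8 : (0:ℝ) < ‖x‖^((α - (d:ℝ))-1) := Real.rpow_pos_of_pos hxpos _
        nlinarith
      calc (-(α - (d:ℝ))) * (2^(1-(α - (d:ℝ))) * ‖x‖^((α - (d:ℝ))-1)) * |‖x - y‖ - ‖x‖|
          ≤ (-(α - (d:ℝ))) * (2^(1-(α - (d:ℝ))) * ‖x‖^((α - (d:ℝ))-1)) * R :=
            mul_le_mul_of_nonneg_left habs h12
        _ = (-(α - (d:ℝ))) * 2^(1-(α - (d:ℝ))) * ‖x‖^((α - (d:ℝ))-1) * R := by ring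
    refine hbound.trans ?_
    rw [integral_const_mul]
    have hfnorm : 0 ≤ ∫ y, ‖f y‖ ∂σ := integral_nonneg (fun y => norm_nonneg _)
    calc K * ∫ y, ‖f y‖ ∂σ ≤ K * R := mul_le_mul_of_nonneg_left hmass hKnonneg
      _ = C2 * R^2 * ‖x‖^(α - (d:ℝ) - 1) := by rw [hKdef, hC2def]; ring
      _ ≤ max C1 C2 * R^2 * ‖x‖^(α - (d:ℝ) - 1) := by
          have h8 : (0:ℝ) ≤ ‖x‖^(α - (d:ℝ) - 1) := (Real.rpow_pos_of_pos hxpos _).le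
          have h9 : (0:ℝ) ≤ R^2 := sq_nonneg R
          gcongr
          exact le_max_right _ _
end

section
/- Let d ≥ 2. There exists a finite ℝ^d-valued Radon measure F on ℝ^d, divergence free in the sense of distributions, such that sup{∫_{ℝ^d} |I_{d−1} F| dν : ν a non-negative Radon measure on ℝ^d with ‖ν‖_{M^1} ≤ 1} = +∞. In particular, the trace inequality ∫ |I_α F| dν ≤ C ‖ν‖_{M^{d−α}} |F|(ℝ^d) for divergence-free F fails at the endpoint α = d−1. -/
open MeasureTheory Metric ENNReal

open Set

namespace S15

lemma coord_le {d : ℕ} (z : EuclideanSpace ℝ (Fin d)) (i : Fin d) : |z i| ≤ ‖z‖ := by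
  have h : (inner ℝ (EuclideanSpace.single i (1:ℝ)) z : ℝ) = z i := by
    simp [EuclideanSpace.inner_single_left]
  calc |z i| = |(inner ℝ (EuclideanSpace.single i (1:ℝ)) z : ℝ)| := by rw [h]
    _ ≤ ‖EuclideanSpace.single i (1:ℝ)‖ * ‖z‖ := abs_real_inner_le_norm _ _
    _ = ‖z‖ := by simp [EuclideanSpace.norm_single]

lemma lineEmb {d : ℕ} (p v : EuclideanSpace ℝ (Fin d)) (hv : ‖v‖ = 1) :
    MeasurableEmbedding (fun t : ℝ => p + t • v) := by
  have hiso : Isometry (fun t : ℝ => p + t • v) := by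
    refine Isometry.of_dist_eq fun a b => ?_
    simp [dist_eq_norm, ← sub_smul, norm_smul, hv, Real.dist_eq]
  exact hiso.isClosedEmbedding.measurableEmbedding

noncomputable def μseg {d : ℕ} (p v : EuclideanSpace ℝ (Fin d)) :
    Measure (EuclideanSpace ℝ (Fin d)) :=
  Measure.map (fun t : ℝ => p + t • v) (volume.restrict (Ioo 0 1))

lemma μseg_univ {d : ℕ} (p v : EuclideanSpace ℝ (Fin d)) :
    μseg p v Set.univ = 1 := by
  rw [μseg, Measure.map_apply (by fun_prop) MeasurableSet.univ]
  simp [Real.volume_Ioo]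

instance {d : ℕ} (p v : EuclideanSpace ℝ (Fin d)) : IsFiniteMeasure (μseg p v) :=
  ⟨by rw [μseg_univ]; exact one_lt_top⟩

lemma μseg_integral {d : ℕ} (p v : EuclideanSpace ℝ (Fin d)) (hv : ‖v‖ = 1)
    {G : Type*} [NormedAddCommGroup G] [NormedSpace ℝ G]
    (g : EuclideanSpace ℝ (Fin d) → G) :
    ∫ y, g y ∂(μseg p v) = ∫ t in Ioo (0:ℝ) 1, g (p + t • v) :=
  (lineEmb p v hv).integral_map _

lemma measurable_coord {d : ℕ} (i : Fin d) :
    Measurable (fun x : EuclideanSpace ℝ (Fin d) => x i) :=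
  (EuclideanSpace.proj i : EuclideanSpace ℝ (Fin d) →L[ℝ] ℝ).continuous.measurable

lemma inner_gradient {d : ℕ} (φ : EuclideanSpace ℝ (Fin d) → ℝ) (x v : EuclideanSpace ℝ (Fin d)) :
    (inner ℝ (gradient φ x) v : ℝ) = fderiv ℝ φ x v := by
  rw [gradient]; exact InnerProductSpace.toDual_symm_apply

lemma gradient_continuous {d : ℕ} {φ : EuclideanSpace ℝ (Fin d) → ℝ} (hφ : ContDiff ℝ (⊤ : ℕ∞) φ) :
    Continuous (gradient φ) := by
  have h1 : Continuous (fderiv ℝ φ) := hφ.continuous_fderiv (by simp)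
  exact (InnerProductSpace.toDual ℝ _).symm.continuous.comp h1

lemma seg_ftc {d : ℕ} (φ : EuclideanSpace ℝ (Fin d) → ℝ) (hφ : ContDiff ℝ (⊤ : ℕ∞) φ)
    (p v : EuclideanSpace ℝ (Fin d)) :
    ∫ t in Ioo (0:ℝ) 1, (fderiv ℝ φ (p + t • v)) v = φ (p + v) - φ p := by
  have hγ : ∀ t : ℝ, HasDerivAt (fun s : ℝ => p + s • v) v t := by
    intro t
    simpa using ((hasDerivAt_id t).smul_const v).const_add p
  have hderiv : ∀ t ∈ uIcc (0:ℝ) 1,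
      HasDerivAt (fun s => φ (p + s • v)) ((fderiv ℝ φ (p + t • v)) v) t := by
    intro t _
    exact ((hφ.differentiable (by simp)).differentiableAt.hasFDerivAt).comp_hasDerivAt t (hγ t)
  have hcont : Continuous fun t : ℝ => (fderiv ℝ φ (p + t • v)) v := by
    have : Continuous fun t : ℝ => p + t • v := by fun_prop
    exact ((hφ.continuous_fderiv (by simp)).comp this).clm_apply continuous_const
  have := intervalIntegral.integral_eq_sub_of_hasDerivAt hderiv
    (hcont.intervalIntegrable 0 1)
  rw [intervalIntegral.integral_of_le zero_le_one, integral_Ioc_eq_integral_Ioo] at this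
  simpa using this

section Sq
variable {d : ℕ} (i0 i1 : Fin d)

noncomputable def e₀ : EuclideanSpace ℝ (Fin d) := EuclideanSpace.single i0 1
noncomputable def e₁ : EuclideanSpace ℝ (Fin d) := EuclideanSpace.single i1 1

noncomputable def sqField : EuclideanSpace ℝ (Fin d) → EuclideanSpace ℝ (Fin d) := fun x =>
  if x i1 = 0 then e₀ i0 else if x i0 = 1 then e₁ i1
  else if x i1 = 1 then -e₀ i0 else if x i0 = 0 then -e₁ i1 else 0

noncomputable def sqMeas : Measure (EuclideanSpace ℝ (Fin d)) :=
  μseg 0 (e₀ i0) + μseg (e₀ i0) (e₁ i1) + μseg (e₀ i0 + e₁ i1) (-e₀ i0) + μseg (e₁ i1) (-e₁ i1)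

lemma norm_e₀ : ‖(e₀ i0 : EuclideanSpace ℝ (Fin d))‖ = 1 := by
  simp [e₀, EuclideanSpace.norm_single]

lemma norm_e₁ : ‖(e₁ i1 : EuclideanSpace ℝ (Fin d))‖ = 1 := by
  simp [e₁, EuclideanSpace.norm_single]

lemma sqField_norm_le (x : EuclideanSpace ℝ (Fin d)) : ‖sqField i0 i1 x‖ ≤ 1 := by
  unfold sqField
  split_ifs <;> simp [norm_e₀, norm_e₁]

lemma sqField_measurable : Measurable (sqField i0 i1) := by
  unfold sqField
  refine Measurable.ite ?_ measurable_const <| Measurable.ite ?_ measurable_const <|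
    Measurable.ite ?_ measurable_const <| Measurable.ite ?_ measurable_const measurable_const
  · exact (measurable_coord i1) (measurableSet_singleton 0)
  · exact (measurable_coord i0) (measurableSet_singleton 1)
  · exact (measurable_coord i1) (measurableSet_singleton 1)
  · exact (measurable_coord i0) (measurableSet_singleton 0)

instance : IsFiniteMeasure (sqMeas i0 i1) := by
  constructor
  rw [sqMeas]
  simp [μseg_univ]
end Sq

section Sq2
variable {d : ℕ} {i0 i1 : Fin d}
variable (h01 : i0 ≠ i1) {t : ℝ} (ht : t ∈ Ioo (0:ℝ) 1)
include h01 ht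

omit ht in
lemma sqField_seg0 : sqField i0 i1 ((0:EuclideanSpace ℝ (Fin d)) + t • e₀ i0) = e₀ i0 := by
  have h10 : i1 ≠ i0 := h01.symm
  simp [sqField, e₀, PiLp.add_apply, PiLp.smul_apply, EuclideanSpace.single_apply, h10]

lemma sqField_seg1 : sqField i0 i1 (e₀ i0 + t • e₁ i1) = e₁ i1 := by
  have h10 : i1 ≠ i0 := h01.symm
  simp [sqField, e₀, e₁, PiLp.add_apply, PiLp.smul_apply, EuclideanSpace.single_apply, h10, h01,
    ht.1.ne']

lemma sqField_seg2 : sqField i0 i1 ((e₀ i0 + e₁ i1) + t • (-e₀ i0)) = -e₀ i0 := by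
  have h10 : i1 ≠ i0 := h01.symm
  simp [sqField, e₀, e₁, PiLp.add_apply, PiLp.smul_apply, PiLp.neg_apply,
    EuclideanSpace.single_apply, h10, h01, ht.1.ne']

lemma sqField_seg3 : sqField i0 i1 (e₁ i1 + t • (-e₁ i1)) = -e₁ i1 := by
  have h10 : i1 ≠ i0 := h01.symm
  have h1 : 1 - t ≠ 0 := by linarith [ht.2]
  have h2 : 1 - t ≠ 1 := by intro h; apply ht.1.ne'; linarith
  simp [sqField, e₀, e₁, PiLp.add_apply, PiLp.smul_apply, PiLp.neg_apply,
    EuclideanSpace.single_apply, h10, h01]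
  rw [if_neg (by intro h; apply h1; linarith), if_neg ht.1.ne']
end Sq2
end S15
namespace S15
section Div
variable {d : ℕ} {i0 i1 : Fin d}

lemma seg_contrib (φ : EuclideanSpace ℝ (Fin d) → ℝ) (hφ : ContDiff ℝ (⊤ : ℕ∞) φ)
    (p v : EuclideanSpace ℝ (Fin d)) (hv : ‖v‖ = 1)
    (hw : ∀ t ∈ Ioo (0:ℝ) 1, sqField i0 i1 (p + t • v) = v) :
    ∫ x, (inner ℝ (gradient φ x) (sqField i0 i1 x) : ℝ) ∂(μseg p v) = φ (p + v) - φ p := by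
  rw [μseg_integral p v hv]
  rw [setIntegral_congr_fun measurableSet_Ioo
    (fun t ht => by simp only [hw t ht] : EqOn (fun t : ℝ => (inner ℝ (gradient φ (p + t • v)) (sqField i0 i1 (p + t • v)) : ℝ))
      (fun t : ℝ => (inner ℝ (gradient φ (p + t • v)) v : ℝ)) (Ioo 0 1))]
  simp_rw [inner_gradient]
  exact seg_ftc φ hφ p v

lemma sq_divFree (h01 : i0 ≠ i1) (φ : EuclideanSpace ℝ (Fin d) → ℝ)
    (hφ : ContDiff ℝ (⊤ : ℕ∞) φ) (hφs : HasCompactSupport φ) :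
    ∫ x, (inner ℝ (gradient φ x) (sqField i0 i1 x) : ℝ) ∂(sqMeas i0 i1) = 0 := by
  set g : EuclideanSpace ℝ (Fin d) → ℝ :=
    fun x => (inner ℝ (gradient φ x) (sqField i0 i1 x) : ℝ) with hg
  have hgrad : Continuous (gradient φ) := gradient_continuous hφ
  have hgm : Measurable g := hgrad.measurable.inner (sqField_measurable i0 i1)
  have hgradc : HasCompactSupport (gradient φ) := by
    have hfd : HasCompactSupport (fderiv ℝ φ) := hφs.fderiv (𝕜 := ℝ)
    exact hfd.comp_left (g := fun L => (InnerProductSpace.toDual ℝ _).symm L) (by simp)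
  obtain ⟨C, hC⟩ := hgradc.exists_bound_of_continuous hgrad
  have hbound : ∀ (μ : Measure (EuclideanSpace ℝ (Fin d))) [IsFiniteMeasure μ], Integrable g μ := by
    intro μ _
    refine (integrable_const C).mono' hgm.aestronglyMeasurable (ae_of_all _ fun x => ?_)
    rw [Real.norm_eq_abs, hg]
    calc |(inner ℝ (gradient φ x) (sqField i0 i1 x) : ℝ)|
        ≤ ‖gradient φ x‖ * ‖sqField i0 i1 x‖ := abs_real_inner_le_norm _ _
      _ ≤ C * 1 := mul_le_mul (hC x) (sqField_norm_le i0 i1 x) (norm_nonneg _)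
          ((norm_nonneg _).trans (hC x))
      _ = C := mul_one C
  rw [sqMeas, integral_add_measure (((hbound _).add_measure (hbound _)).add_measure (hbound _))
      (hbound _),
    integral_add_measure ((hbound _).add_measure (hbound _)) (hbound _),
    integral_add_measure (hbound _) (hbound _)]
  rw [seg_contrib φ hφ 0 (e₀ i0) (norm_e₀ i0) (fun t ht => sqField_seg0 h01),
    seg_contrib φ hφ (e₀ i0) (e₁ i1) (norm_e₁ i1) (fun t ht => sqField_seg1 h01 ht),
    seg_contrib φ hφ (e₀ i0 + e₁ i1) (-e₀ i0) (by simp [norm_e₀]) (fun t ht => sqField_seg2 h01 ht),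
    seg_contrib φ hφ (e₁ i1) (-e₁ i1) (by simp [norm_e₁]) (fun t ht => sqField_seg3 h01 ht)]
  have hv2 : e₀ i0 + e₁ i1 + -e₀ i0 = e₁ i1 := by abel
  have hv3 : e₁ i1 + -e₁ i1 = 0 := by abel
  rw [hv2, hv3, zero_add]
  ring
end Div
end S15

namespace S15
section Riesz
variable {d : ℕ} {i0 i1 : Fin d} {s t : ℝ}

noncomputable def xpt (i0 i1 : Fin d) (s t : ℝ) : EuclideanSpace ℝ (Fin d) :=
  t • e₀ i0 - s • e₁ i1

variable (h01 : i0 ≠ i1) (hs : 0 < s)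

include h01 in
lemma xpt_i0 : xpt i0 i1 s t i0 = t := by
  simp [xpt, e₀, e₁, PiLp.sub_apply, PiLp.smul_apply, EuclideanSpace.single_apply, h01, h01.symm]

include h01 in
lemma xpt_i1 : xpt i0 i1 s t i1 = -s := by
  simp [xpt, e₀, e₁, PiLp.sub_apply, PiLp.smul_apply, EuclideanSpace.single_apply, h01, h01.symm]

lemma coord_sub_le (x y : EuclideanSpace ℝ (Fin d)) (i : Fin d) : |x i - y i| ≤ ‖x - y‖ := by
  simpa [PiLp.sub_apply] using coord_le (x - y) i

include h01 hs in
lemma riesz_kernel_bound (ht : t ∈ Ioo (0:ℝ) (3/4)) (y : EuclideanSpace ℝ (Fin d)) :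
    ‖‖xpt i0 i1 s t - y‖⁻¹ • sqField i0 i1 y‖ ≤ (min s (min t 4⁻¹))⁻¹ := by
  set c := min s (min t 4⁻¹) with hcdef
  have hc0 : 0 < c := lt_min hs (lt_min ht.1 (by norm_num))
  set x := xpt i0 i1 s t with hxdef
  have main : sqField i0 i1 y = 0 ∨ c ≤ ‖x - y‖ := by
    unfold sqField
    split_ifs with h1 h2 h3 h4
    · right
      have : |x i1 - y i1| = s := by
        rw [hxdef, xpt_i1 h01, h1]; simp [abs_of_nonneg, hs.le]
      calc c ≤ s := min_le_left _ _
        _ = |x i1 - y i1| := this.symm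
        _ ≤ ‖x - y‖ := coord_sub_le x y i1
    · right
      have : |x i0 - y i0| = 1 - t := by
        rw [hxdef, xpt_i0 h01, h2, abs_sub_comm, abs_of_nonneg (by linarith [ht.2])]
      calc c ≤ 4⁻¹ := (min_le_right _ _).trans (min_le_right _ _)
        _ ≤ 1 - t := by nlinarith [ht.2]
        _ = |x i0 - y i0| := this.symm
        _ ≤ ‖x - y‖ := coord_sub_le x y i0
    · right
      have : |x i1 - y i1| = s + 1 := by
        rw [hxdef, xpt_i1 h01, h3, abs_sub_comm, abs_of_nonneg (by linarith)]; ring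
      calc c ≤ s := min_le_left _ _
        _ ≤ s + 1 := by linarith
        _ = |x i1 - y i1| := this.symm
        _ ≤ ‖x - y‖ := coord_sub_le x y i1
    · right
      have : |x i0 - y i0| = t := by
        rw [hxdef, xpt_i0 h01, h4, sub_zero, abs_of_nonneg ht.1.le]
      calc c ≤ t := (min_le_right _ _).trans (min_le_left _ _)
        _ = |x i0 - y i0| := this.symm
        _ ≤ ‖x - y‖ := coord_sub_le x y i0
    · left; rfl
  rcases main with h | h
  · rw [h, smul_zero, norm_zero]
    positivity
  · have hxy : 0 < ‖x - y‖ := hc0.trans_le h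
    rw [norm_smul, Real.norm_eq_abs, abs_of_nonneg (by positivity)]
    calc ‖x - y‖⁻¹ * ‖sqField i0 i1 y‖ ≤ c⁻¹ * 1 := by
          gcongr
          exact sqField_norm_le i0 i1 y
      _ = c⁻¹ := mul_one _
end Riesz
end S15
namespace S15
section Riesz2
variable {d : ℕ} {i0 i1 : Fin d} {s t : ℝ}

lemma riesz_integrable' {x : EuclideanSpace ℝ (Fin d)} {C : ℝ}
    (hb : ∀ y, ‖‖x - y‖⁻¹ • sqField i0 i1 y‖ ≤ C)
    (μ : Measure (EuclideanSpace ℝ (Fin d))) [IsFiniteMeasure μ] :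
    Integrable (fun y => ‖x - y‖⁻¹ • sqField i0 i1 y) μ := by
  have hm : Measurable fun y : EuclideanSpace ℝ (Fin d) => ‖x - y‖⁻¹ • sqField i0 i1 y := by
    have h1 : Measurable fun y : EuclideanSpace ℝ (Fin d) => ‖x - y‖⁻¹ :=
      ((continuous_const.sub continuous_id).norm.measurable).inv
    exact h1.smul (sqField_measurable i0 i1)
  exact (integrable_const C).mono' hm.aestronglyMeasurable (ae_of_all _ hb)

lemma riesz_eq (h01 : i0 ≠ i1) (hs : 0 < s) (ht : t ∈ Ioo (0:ℝ) (3/4)) :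
    rieszPot ((d:ℝ)-1) (sqMeas i0 i1) (sqField i0 i1) (xpt i0 i1 s t) =
      (∫ τ in Ioo (0:ℝ) 1, ‖xpt i0 i1 s t - ((0:EuclideanSpace ℝ (Fin d)) + τ • e₀ i0)‖⁻¹) • e₀ i0
      + (∫ τ in Ioo (0:ℝ) 1, ‖xpt i0 i1 s t - (e₀ i0 + τ • e₁ i1)‖⁻¹) • e₁ i1
      + (∫ τ in Ioo (0:ℝ) 1, ‖xpt i0 i1 s t - ((e₀ i0 + e₁ i1) + τ • (-e₀ i0))‖⁻¹) • (-e₀ i0)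
      + (∫ τ in Ioo (0:ℝ) 1, ‖xpt i0 i1 s t - (e₁ i1 + τ • (-e₁ i1))‖⁻¹) • (-e₁ i1) := by
  set x := xpt i0 i1 s t with hxdef
  have hexp : ((d:ℝ) - 1) - (d:ℝ) = -1 := by ring
  have hint := riesz_integrable' (x := x)
    (hb := fun y => riesz_kernel_bound h01 hs ht y)
  rw [rieszPot]
  simp only [hexp, Real.rpow_neg_one]
  rw [sqMeas,
    integral_add_measure (((hint _).add_measure (hint _)).add_measure (hint _)) (hint _),
    integral_add_measure ((hint _).add_measure (hint _)) (hint _),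
    integral_add_measure (hint _) (hint _)]
  rw [μseg_integral _ _ (norm_e₀ i0), μseg_integral _ _ (norm_e₁ i1),
    μseg_integral _ _ (by simp [norm_e₀]), μseg_integral _ _ (by simp [norm_e₁])]
  have h0 : ∫ τ in Ioo (0:ℝ) 1, ‖x - ((0:EuclideanSpace ℝ (Fin d)) + τ • e₀ i0)‖⁻¹ •
      sqField i0 i1 ((0:EuclideanSpace ℝ (Fin d)) + τ • e₀ i0)
      = (∫ τ in Ioo (0:ℝ) 1, ‖x - ((0:EuclideanSpace ℝ (Fin d)) + τ • e₀ i0)‖⁻¹) • e₀ i0 := by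
    rw [← integral_smul_const]
    exact setIntegral_congr_fun measurableSet_Ioo (fun τ hτ => by rw [sqField_seg0 h01])
  have h1 : ∫ τ in Ioo (0:ℝ) 1, ‖x - (e₀ i0 + τ • e₁ i1)‖⁻¹ • sqField i0 i1 (e₀ i0 + τ • e₁ i1)
      = (∫ τ in Ioo (0:ℝ) 1, ‖x - (e₀ i0 + τ • e₁ i1)‖⁻¹) • e₁ i1 := by
    rw [← integral_smul_const]
    exact setIntegral_congr_fun measurableSet_Ioo (fun τ hτ => by rw [sqField_seg1 h01 hτ])
  have h2 : ∫ τ in Ioo (0:ℝ) 1, ‖x - ((e₀ i0 + e₁ i1) + τ • (-e₀ i0))‖⁻¹ •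
      sqField i0 i1 ((e₀ i0 + e₁ i1) + τ • (-e₀ i0))
      = (∫ τ in Ioo (0:ℝ) 1, ‖x - ((e₀ i0 + e₁ i1) + τ • (-e₀ i0))‖⁻¹) • (-e₀ i0) := by
    rw [← integral_smul_const]
    exact setIntegral_congr_fun measurableSet_Ioo (fun τ hτ => by rw [sqField_seg2 h01 hτ])
  have h3 : ∫ τ in Ioo (0:ℝ) 1, ‖x - (e₁ i1 + τ • (-e₁ i1))‖⁻¹ •
      sqField i0 i1 (e₁ i1 + τ • (-e₁ i1))
      = (∫ τ in Ioo (0:ℝ) 1, ‖x - (e₁ i1 + τ • (-e₁ i1))‖⁻¹) • (-e₁ i1) := by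
    rw [← integral_smul_const]
    exact setIntegral_congr_fun measurableSet_Ioo (fun τ hτ => by rw [sqField_seg3 h01 hτ])
  rw [h0, h1, h2, h3]
end Riesz2
end S15
namespace S15
section Riesz3
variable {d : ℕ} {i0 i1 : Fin d} {s t : ℝ}

lemma A2_le_one (h01 : i0 ≠ i1) (hs : 0 < s) :
    ∫ τ in Ioo (0:ℝ) 1, ‖xpt i0 i1 s t - ((e₀ i0 + e₁ i1) + τ • (-e₀ i0))‖⁻¹ ≤ 1 := by
  have hy : ∀ τ : ℝ, ((e₀ i0 + e₁ i1) + τ • (-e₀ i0)) i1 = 1 := by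
    intro τ
    simp [e₀, e₁, PiLp.add_apply, PiLp.smul_apply, PiLp.neg_apply,
      EuclideanSpace.single_apply, h01.symm]
  have hlb : ∀ τ : ℝ, 1 ≤ ‖xpt i0 i1 s t - ((e₀ i0 + e₁ i1) + τ • (-e₀ i0))‖ := by
    intro τ
    calc (1:ℝ) ≤ s + 1 := by linarith
      _ = |xpt i0 i1 s t i1 - ((e₀ i0 + e₁ i1) + τ • (-e₀ i0)) i1| := by
          rw [xpt_i1 h01, hy τ, abs_sub_comm, abs_of_nonneg (by linarith)]; ring
      _ ≤ _ := coord_sub_le _ _ i1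
  have hcont : Continuous fun τ : ℝ => ‖xpt i0 i1 s t - ((e₀ i0 + e₁ i1) + τ • (-e₀ i0))‖⁻¹ := by
    refine Continuous.inv₀ (by fun_prop) (fun τ => ?_)
    have := hlb τ; positivity
  calc ∫ τ in Ioo (0:ℝ) 1, ‖xpt i0 i1 s t - ((e₀ i0 + e₁ i1) + τ • (-e₀ i0))‖⁻¹
      ≤ ∫ _ in Ioo (0:ℝ) 1, (1:ℝ) := by
        refine setIntegral_mono_on
          ((hcont.integrableOn_Icc (a := 0) (b := 1)).mono_set Ioo_subset_Icc_self)
          (integrableOn_const (by simp [Real.volume_Ioo]))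
          measurableSet_Ioo (fun τ hτ => ?_)
        have h1 := hlb τ
        exact inv_le_one_of_one_le₀ h1
    _ = 1 := by simp [Real.volume_Ioo]

lemma A0_ge (h01 : i0 ≠ i1) (hs : 0 < s) (ht : t ∈ Ioo (0:ℝ) (3/4)) :
    Real.log ((4*s)⁻¹)
      ≤ ∫ τ in Ioo (0:ℝ) 1, ‖xpt i0 i1 s t - ((0:EuclideanSpace ℝ (Fin d)) + τ • e₀ i0)‖⁻¹ := by
  have hxy : ∀ τ : ℝ, xpt i0 i1 s t - ((0:EuclideanSpace ℝ (Fin d)) + τ • e₀ i0)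
      = (t - τ) • e₀ i0 - s • e₁ i1 := by
    intro τ; rw [xpt]; module
  have hlb : ∀ τ : ℝ, s ≤ ‖xpt i0 i1 s t - ((0:EuclideanSpace ℝ (Fin d)) + τ • e₀ i0)‖ := by
    intro τ
    have hy : ((0:EuclideanSpace ℝ (Fin d)) + τ • e₀ i0) i1 = 0 := by
      simp [e₀, PiLp.add_apply, PiLp.smul_apply, EuclideanSpace.single_apply, h01.symm]
    calc s = |xpt i0 i1 s t i1 - ((0:EuclideanSpace ℝ (Fin d)) + τ • e₀ i0) i1| := by
          rw [xpt_i1 h01, hy, sub_zero, abs_neg, abs_of_nonneg hs.le]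
      _ ≤ _ := coord_sub_le _ _ i1
  have hub : ∀ τ : ℝ, ‖xpt i0 i1 s t - ((0:EuclideanSpace ℝ (Fin d)) + τ • e₀ i0)‖
      ≤ |t - τ| + s := by
    intro τ
    rw [hxy τ]
    calc ‖(t - τ) • e₀ i0 - s • e₁ i1‖ ≤ ‖(t - τ) • e₀ i0‖ + ‖s • e₁ i1‖ := norm_sub_le _ _
      _ = |t - τ| + s := by
          simp [norm_smul, norm_e₀, norm_e₁, Real.norm_eq_abs, abs_of_nonneg hs.le]
  have hcont : Continuous fun τ : ℝ =>
      ‖xpt i0 i1 s t - ((0:EuclideanSpace ℝ (Fin d)) + τ • e₀ i0)‖⁻¹ := by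
    exact Continuous.inv₀ (by fun_prop) (fun τ => ne_of_gt (hs.trans_le (hlb τ)))
  have hint : IntegrableOn
      (fun τ : ℝ => ‖xpt i0 i1 s t - ((0:EuclideanSpace ℝ (Fin d)) + τ • e₀ i0)‖⁻¹)
      (Ioo (0:ℝ) 1) volume :=
    (hcont.integrableOn_Icc (a := 0) (b := 1)).mono_set Ioo_subset_Icc_self
  have hcont2 : ContinuousOn (fun τ : ℝ => (τ - t + s)⁻¹) (Icc t 1) := by
    refine ContinuousOn.inv₀ (by fun_prop) (fun τ hτ => ?_)
    have h' : s ≤ τ - t + s := by linarith [hτ.1]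
    exact ne_of_gt (hs.trans_le h')
  have hint2 : IntegrableOn (fun τ : ℝ => (τ - t + s)⁻¹) (Ioo t 1) volume :=
    (hcont2.integrableOn_compact isCompact_Icc).mono_set Ioo_subset_Icc_self
  have ht1 : t ≤ 1 := le_trans ht.2.le (by norm_num)
  have step3 : ∫ τ in Ioo t 1, (τ - t + s)⁻¹ = Real.log ((1 - t + s) / s) := by
    rw [← integral_Ioc_eq_integral_Ioo, ← intervalIntegral.integral_of_le ht1]
    have hfun : (fun τ : ℝ => (τ - t + s)⁻¹) = fun τ : ℝ => (τ + (s - t))⁻¹ := by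
      funext τ; ring_nf
    rw [hfun, intervalIntegral.integral_comp_add_right (fun u => u⁻¹) (s - t)]
    have e1 : t + (s - t) = s := by ring
    have e2 : 1 + (s - t) = 1 - t + s := by ring
    rw [e1, e2, integral_inv]
    rw [Set.uIcc_of_le (by linarith)]
    rintro ⟨hh1, hh2⟩
    linarith
  have step4 : Real.log ((4*s)⁻¹) ≤ Real.log ((1 - t + s) / s) := by
    have h1 : (4*s)⁻¹ = 4⁻¹ / s := by rw [mul_inv]; ring
    rw [h1]
    refine Real.log_le_log (by positivity) ?_
    gcongr
    linarith [ht.2]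
  calc Real.log ((4*s)⁻¹) ≤ Real.log ((1 - t + s) / s) := step4
    _ = ∫ τ in Ioo t 1, (τ - t + s)⁻¹ := step3.symm
    _ ≤ ∫ τ in Ioo t 1, ‖xpt i0 i1 s t - ((0:EuclideanSpace ℝ (Fin d)) + τ • e₀ i0)‖⁻¹ := by
        refine setIntegral_mono_on hint2
          (hint.mono_set (Ioo_subset_Ioo ht.1.le le_rfl)) measurableSet_Ioo (fun τ hτ => ?_)
        have habs : |t - τ| = τ - t := by
          rw [abs_sub_comm]; exact abs_of_pos (by linarith [hτ.1])
        refine inv_anti₀ (hs.trans_le (hlb τ)) ?_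
        calc ‖xpt i0 i1 s t - ((0:EuclideanSpace ℝ (Fin d)) + τ • e₀ i0)‖
            ≤ |t - τ| + s := hub τ
          _ = τ - t + s := by rw [habs]
    _ ≤ ∫ τ in Ioo (0:ℝ) 1, ‖xpt i0 i1 s t - ((0:EuclideanSpace ℝ (Fin d)) + τ • e₀ i0)‖⁻¹ := by
        refine setIntegral_mono_set hint (ae_of_all _ (fun τ => by positivity)) ?_
        exact HasSubset.Subset.eventuallyLE (Ioo_subset_Ioo ht.1.le le_rfl)
end Riesz3
end S15
namespace S15
section Riesz4
variable {d : ℕ} {i0 i1 : Fin d} {s t : ℝ}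

lemma riesz_lower (h01 : i0 ≠ i1) (hs : 0 < s) (ht : t ∈ Ioo (0:ℝ) (3/4)) :
    Real.log ((4*s)⁻¹) - 1
      ≤ ‖rieszPot ((d:ℝ)-1) (sqMeas i0 i1) (sqField i0 i1) (xpt i0 i1 s t)‖ := by
  set A0 : ℝ := ∫ τ in Ioo (0:ℝ) 1,
    ‖xpt i0 i1 s t - ((0:EuclideanSpace ℝ (Fin d)) + τ • e₀ i0)‖⁻¹ with hA0
  set A1 : ℝ := ∫ τ in Ioo (0:ℝ) 1, ‖xpt i0 i1 s t - (e₀ i0 + τ • e₁ i1)‖⁻¹ with hA1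
  set A2 : ℝ := ∫ τ in Ioo (0:ℝ) 1,
    ‖xpt i0 i1 s t - ((e₀ i0 + e₁ i1) + τ • (-e₀ i0))‖⁻¹ with hA2
  set A3 : ℝ := ∫ τ in Ioo (0:ℝ) 1, ‖xpt i0 i1 s t - (e₁ i1 + τ • (-e₁ i1))‖⁻¹ with hA3
  have hcoord : (A0 • e₀ i0 + A1 • e₁ i1 + A2 • (-e₀ i0) + A3 • (-e₁ i1)) i0 = A0 - A2 := by
    simp [e₀, e₁, PiLp.add_apply, PiLp.smul_apply, PiLp.neg_apply,
      EuclideanSpace.single_apply, h01, h01.symm]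
    ring
  calc Real.log ((4*s)⁻¹) - 1 ≤ A0 - A2 := by
        have h1 := A0_ge h01 hs ht
        have h2 := A2_le_one (t := t) h01 hs
        rw [← hA0] at h1
        rw [← hA2] at h2
        linarith
    _ ≤ |A0 - A2| := le_abs_self _
    _ = |(rieszPot ((d:ℝ)-1) (sqMeas i0 i1) (sqField i0 i1) (xpt i0 i1 s t)) i0| := by
        rw [riesz_eq h01 hs ht, hcoord]
    _ ≤ _ := coord_le _ i0
end Riesz4
end S15

namespace S15
section Nu
variable {d : ℕ} {i0 i1 : Fin d} {s : ℝ}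

noncomputable def νline (i0 i1 : Fin d) (s : ℝ) : Measure (EuclideanSpace ℝ (Fin d)) :=
  (2⁻¹ : ℝ≥0∞) • Measure.map (fun τ : ℝ => xpt i0 i1 s τ) (volume.restrict (Ioo 0 (3/4)))

lemma xpt_line : (fun τ : ℝ => xpt i0 i1 s τ) = fun τ : ℝ => -(s • e₁ i1) + τ • e₀ i0 := by
  funext τ; rw [xpt]; module

lemma xpt_emb : MeasurableEmbedding (fun τ : ℝ => xpt i0 i1 s τ) := by
  rw [xpt_line]; exact lineEmb _ _ (norm_e₀ i0)

instance : IsFiniteMeasure (νline i0 i1 s) := by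
  constructor
  rw [νline, Measure.smul_apply, Measure.map_apply xpt_emb.measurable MeasurableSet.univ]
  simp only [Set.preimage_univ, Measure.restrict_apply_univ, smul_eq_mul, Real.volume_Ioo]
  exact mul_lt_top (by norm_num) ofReal_lt_top

lemma morrey_νline (h01 : i0 ≠ i1) : morreyNorm 1 (νline i0 i1 s) ≤ 1 := by
  rw [morreyNorm]
  refine iSup_le fun x => iSup_le fun r => iSup_le fun hr => ?_
  have hball : νline i0 i1 s (Metric.ball x r) ≤ ENNReal.ofReal r := by
    rw [νline, Measure.smul_apply, smul_eq_mul,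
      Measure.map_apply xpt_emb.measurable measurableSet_ball]
    have hsub : (fun τ : ℝ => xpt i0 i1 s τ) ⁻¹' Metric.ball x r
        ⊆ Metric.ball (x i0) r := by
      intro τ hτ
      simp only [Set.mem_preimage, Metric.mem_ball] at hτ ⊢
      calc dist τ (x i0) = |xpt i0 i1 s τ i0 - x i0| := by
            rw [xpt_i0 h01, Real.dist_eq]
        _ ≤ ‖xpt i0 i1 s τ - x‖ := coord_sub_le _ _ i0
        _ = dist (xpt i0 i1 s τ) x := (dist_eq_norm _ _).symm
        _ < r := hτ
    calc 2⁻¹ * (volume.restrict (Ioo 0 (3/4))) ((fun τ : ℝ => xpt i0 i1 s τ) ⁻¹' Metric.ball x r)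
        ≤ 2⁻¹ * volume (Metric.ball (x i0) r) := by
          exact mul_le_mul_right
            (le_trans (Measure.restrict_apply_le _ _) (measure_mono hsub)) _
      _ = ENNReal.ofReal r := by
          rw [Real.volume_ball, ENNReal.ofReal_mul (by norm_num), ENNReal.ofReal_ofNat,
            ← mul_assoc, ENNReal.inv_mul_cancel (by norm_num) (by norm_num), one_mul]
  rw [Real.rpow_one]
  exact ENNReal.div_le_of_le_mul (by rw [one_mul]; exact hball)

lemma lint_ge (h01 : i0 ≠ i1) (hs : 0 < s) :
    ENNReal.ofReal (Real.log ((4*s)⁻¹) - 1) * (2⁻¹ * ENNReal.ofReal (3/4))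
      ≤ ∫⁻ x, ENNReal.ofReal ‖rieszPot ((d:ℝ)-1) (sqMeas i0 i1) (sqField i0 i1) x‖
          ∂(νline i0 i1 s) := by
  set T : Set (EuclideanSpace ℝ (Fin d)) :=
    (fun τ : ℝ => xpt i0 i1 s τ) '' (Ioo 0 (3/4)) with hTdef
  have hT : MeasurableSet T := xpt_emb.measurableSet_image.mpr measurableSet_Ioo
  have hpt : ∀ x, T.indicator (fun _ => ENNReal.ofReal (Real.log ((4*s)⁻¹) - 1)) x
      ≤ ENNReal.ofReal ‖rieszPot ((d:ℝ)-1) (sqMeas i0 i1) (sqField i0 i1) x‖ := by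
    intro x
    by_cases hx : x ∈ T
    · rw [Set.indicator_of_mem hx]
      obtain ⟨τ, hτ, rfl⟩ := hx
      exact ENNReal.ofReal_le_ofReal (riesz_lower h01 hs hτ)
    · rw [Set.indicator_of_notMem hx]
      exact zero_le
  have hνT : νline i0 i1 s T = 2⁻¹ * ENNReal.ofReal (3/4) := by
    rw [νline, Measure.smul_apply, smul_eq_mul,
      Measure.map_apply xpt_emb.measurable hT, hTdef,
      Set.preimage_image_eq _ xpt_emb.injective,
      Measure.restrict_apply measurableSet_Ioo, Set.inter_self, Real.volume_Ioo]
    norm_num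
  calc ENNReal.ofReal (Real.log ((4*s)⁻¹) - 1) * (2⁻¹ * ENNReal.ofReal (3/4))
      = ∫⁻ x, T.indicator (fun _ => ENNReal.ofReal (Real.log ((4*s)⁻¹) - 1)) x
          ∂(νline i0 i1 s) := by
        rw [lintegral_indicator hT, setLIntegral_const, hνT]
    _ ≤ _ := lintegral_mono hpt
end Nu
end S15

/-- For `d ≥ 2` there exists a finite divergence-free `ℝ^d`-valued Radon
measure `F = f σ` such that `sup {∫ |I_{d-1}F| dν : ν ≥ 0 Radon, ‖ν‖_{M^1} ≤ 1} = ∞`;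
in particular the trace inequality fails at the endpoint `α = d - 1`. -/
theorem statement15 (d : ℕ) (hd : 2 ≤ d) :
    ∃ (σ : Measure (EuclideanSpace ℝ (Fin d)))
      (f : EuclideanSpace ℝ (Fin d) → EuclideanSpace ℝ (Fin d)),
      IsFiniteMeasure σ ∧ Integrable f σ ∧ DivFree σ f ∧
      (⨆ (ν : Measure (EuclideanSpace ℝ (Fin d))) (_ : IsLocallyFiniteMeasure ν)
          (_ : morreyNorm 1 ν ≤ 1),
        ∫⁻ x, ENNReal.ofReal ‖rieszPot ((d : ℝ) - 1) σ f x‖ ∂ν) = ⊤ := by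
  have h0d : 0 < d := by omega
  have h1d : 1 < d := by omega
  set i0 : Fin d := ⟨0, h0d⟩ with hi0
  set i1 : Fin d := ⟨1, h1d⟩ with hi1
  have h01 : i0 ≠ i1 := by simp [hi0, hi1, Fin.ext_iff]
  refine ⟨S15.sqMeas i0 i1, S15.sqField i0 i1, inferInstance, ?_, ?_, ?_⟩
  · exact (integrable_const 1).mono' (S15.sqField_measurable i0 i1).aestronglyMeasurable
      (ae_of_all _ fun x => by simpa using S15.sqField_norm_le i0 i1 x)
  · intro φ hφ hφs
    exact S15.sq_divFree h01 φ hφ hφs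
  · by_contra hne
    obtain ⟨n, hn⟩ := ENNReal.exists_nat_gt hne
    set s : ℝ := 4⁻¹ * Real.exp (-(8/3 * n + 1)) with hsdef
    have hs : 0 < s := by positivity
    have hlog : Real.log ((4*s)⁻¹) - 1 = 8/3 * n := by
      have h4s : (4:ℝ) * s = Real.exp (-(8/3 * n + 1)) := by rw [hsdef]; ring
      rw [h4s, ← Real.exp_neg, Real.log_exp]; ring
    have hval : (n : ℝ≥0∞) ≤ ∫⁻ x, ENNReal.ofReal
        ‖rieszPot ((d:ℝ)-1) (S15.sqMeas i0 i1) (S15.sqField i0 i1) x‖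
        ∂(S15.νline i0 i1 s) := by
      refine le_trans (le_of_eq ?_) (S15.lint_ge h01 hs)
      rw [hlog]
      rw [show (2⁻¹ : ℝ≥0∞) = ENNReal.ofReal 2⁻¹ by
        rw [ENNReal.ofReal_inv_of_pos (by norm_num), ENNReal.ofReal_ofNat]]
      rw [← ENNReal.ofReal_mul (by norm_num : (0:ℝ) ≤ 2⁻¹),
        ← ENNReal.ofReal_mul (by positivity : (0:ℝ) ≤ 8/3 * n)]
      rw [show (8/3 * (n:ℝ)) * (2⁻¹ * (3/4)) = (n:ℝ) by ring]
      exact (ENNReal.ofReal_natCast n).symm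
    have hle : (n : ℝ≥0∞) ≤ ⨆ (ν : Measure (EuclideanSpace ℝ (Fin d)))
        (_ : IsLocallyFiniteMeasure ν) (_ : morreyNorm 1 ν ≤ 1),
        ∫⁻ x, ENNReal.ofReal ‖rieszPot ((d : ℝ) - 1) (S15.sqMeas i0 i1) (S15.sqField i0 i1) x‖ ∂ν := by
      refine le_trans hval ?_
      refine le_iSup_of_le (S15.νline i0 i1 s) ?_
      refine le_iSup_of_le inferInstance ?_
      exact le_iSup_of_le (S15.morrey_νline h01) le_rfl
    exact absurd hn (not_lt.mpr hle)
end
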